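/- arXiv:2108.04076 — 4 statements merged into one kernel-verified Lean document; each statement's English description precedes it below -/
import Mathlib

section
/- If (g,{-,...,-}) is an n-pre-Lie algebra, then the induced n-bracket [x1,...,xn]_C = Σ_{i=1}^n (−1)^{n−i}{x1,...,x̂i,...,xn,xi} defines an n-Lie algebra structure on g. -/
/-- A map on `k`-tuples is multilinear (additive and homogeneous in each slot). -/
def MultiLinearOn (K : Type*) [Field K] {g h : Type*} [AddCommGroup g] [Module K g]
    [AddCommGroup h] [Module K h] {k : ℕ} (f : (Fin k → g) → h) : Prop :=
  (∀ (x : Fin k → g) (i : Fin k) (a b : g),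
      f (Function.update x i (a + b)) = f (Function.update x i a) + f (Function.update x i b)) ∧
  (∀ (x : Fin k → g) (i : Fin k) (c : K) (a : g),
      f (Function.update x i (c • a)) = c • f (Function.update x i a))

/-- A map on `k`-tuples is skew-symmetric. -/
def SkewOn {g h : Type*} [AddCommGroup h] {k : ℕ} (f : (Fin k → g) → h) : Prop :=
  ∀ (x : Fin k → g) (σ : Equiv.Perm (Fin k)), f (x ∘ σ) = (Equiv.Perm.sign σ : ℤ) • f x

/-- The Filippov (fundamental) identity for an `(m+2)`-ary bracket. -/
def Filippov {g : Type*} [AddCommGroup g] {m : ℕ} (br : (Fin (m + 2) → g) → g) : Prop :=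
  ∀ (x : Fin (m + 1) → g) (y : Fin (m + 2) → g),
    br (Fin.snoc x (br y)) =
      ∑ i : Fin (m + 2), br (Function.update y i (br (Fin.snoc x (y i))))

/-- `br` is an `n`-Lie algebra bracket (`n = m+2`): multilinear, skew-symmetric, Filippov. -/
def IsNLie (K : Type*) [Field K] {g : Type*} [AddCommGroup g] [Module K g] {m : ℕ}
    (br : (Fin (m + 2) → g) → g) : Prop :=
  MultiLinearOn K br ∧ SkewOn br ∧ Filippov br

/-- `ρ` is a representation of the `(m+2)`-Lie algebra `(g, br)` on `V`. -/
def IsRep (K : Type*) [Field K] {g V : Type*} [AddCommGroup g] [Module K g]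
    [AddCommGroup V] [Module K V] {m : ℕ} (br : (Fin (m + 2) → g) → g)
    (ρ : (Fin (m + 1) → g) → Module.End K V) : Prop :=
  MultiLinearOn K ρ ∧ SkewOn ρ ∧
  (∀ X Y : Fin (m + 1) → g,
      ρ X * ρ Y - ρ Y * ρ X =
        ∑ i : Fin (m + 1), ρ (Function.update Y i (br (Fin.snoc X (Y i))))) ∧
  (∀ (x : Fin m → g) (y : Fin (m + 2) → g),
      ρ (Fin.snoc x (br y)) =
        ∑ i : Fin (m + 2), ((-1 : ℤ) ^ ((m + 1) - (i : ℕ))) •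
          (ρ (fun j => y (i.succAbove j)) * ρ (Fin.snoc x (y i))))

/-- `T : V → g` is a relative Rota-Baxter operator on the `(m+2)`-LieRep pair `(g, br; ρ)`. -/
def IsRBO (K : Type*) [Field K] {g V : Type*} [AddCommGroup g] [Module K g]
    [AddCommGroup V] [Module K V] {m : ℕ} (br : (Fin (m + 2) → g) → g)
    (ρ : (Fin (m + 1) → g) → Module.End K V) (T : V →ₗ[K] g) : Prop :=
  ∀ v : Fin (m + 2) → V,
    br (fun i => T (v i)) =
      ∑ i : Fin (m + 2), ((-1 : ℤ) ^ ((m + 1) - (i : ℕ))) •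
        T (ρ (fun j => T (v (i.succAbove j))) (v i))

/-- The induced bracket `[u₁,...,uₙ]_T` on `V` of a relative Rota-Baxter operator. -/
def rbBracket (K : Type*) [Field K] {g V : Type*} [AddCommGroup g] [Module K g]
    [AddCommGroup V] [Module K V] {m : ℕ}
    (ρ : (Fin (m + 1) → g) → Module.End K V) (T : V →ₗ[K] g)
    (v : Fin (m + 2) → V) : V :=
  ∑ i : Fin (m + 2), ((-1 : ℤ) ^ ((m + 1) - (i : ℕ))) •
    ρ (fun j => T (v (i.succAbove j))) (v i)

/-- The induced representation map `ρ_T` of `(V, [-,...,-]_T)` on `g`. -/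
def rbRho (K : Type*) [Field K] {g V : Type*} [AddCommGroup g] [Module K g]
    [AddCommGroup V] [Module K V] {m : ℕ} (br : (Fin (m + 2) → g) → g)
    (ρ : (Fin (m + 1) → g) → Module.End K V) (T : V →ₗ[K] g)
    (u : Fin (m + 1) → V) (x : g) : g :=
  br (Fin.snoc (fun j => T (u j)) x) -
    ∑ i : Fin (m + 1), ((-1 : ℤ) ^ ((m + 1) - (i : ℕ))) •
      T (ρ (Fin.snoc (fun j : Fin m => T (u (i.succAbove j))) x) (u i))

/-- The bracket `[x₁,...,xₙ]_C` induced by an `n`-pre-Lie product (`n = m+2`). -/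
def preC (K : Type*) [Field K] {g : Type*} [AddCommGroup g] [Module K g] {m : ℕ}
    (p : (Fin (m + 1) → g) → g → g) (y : Fin (m + 2) → g) : g :=
  ∑ i : Fin (m + 2), ((-1 : ℤ) ^ ((m + 1) - (i : ℕ))) •
    p (fun j => y (i.succAbove j)) (y i)

/-- `p` is an `n`-pre-Lie algebra structure (`n = m+2`). -/
def IsNPreLie (K : Type*) [Field K] {g : Type*} [AddCommGroup g] [Module K g] {m : ℕ}
    (p : (Fin (m + 1) → g) → g → g) : Prop :=
  (∀ z : g, MultiLinearOn K (fun x => p x z)) ∧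
  (∀ (x : Fin (m + 1) → g) (a b : g), p x (a + b) = p x a + p x b) ∧
  (∀ (x : Fin (m + 1) → g) (c : K) (a : g), p x (c • a) = c • p x a) ∧
  (∀ z : g, SkewOn (fun x => p x z)) ∧
  (∀ (x y : Fin (m + 1) → g) (z : g),
      p x (p y z) =
        (∑ i : Fin (m + 1), p (Function.update y i (preC K p (Fin.snoc x (y i)))) z) +
          p y (p x z)) ∧
  (∀ (x : Fin m → g) (w : g) (y : Fin (m + 2) → g),
      p (Fin.cons (preC K p y) x) w =
        ∑ i : Fin (m + 2), ((-1 : ℤ) ^ ((m + 1) - (i : ℕ))) •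
          p (fun j => y (i.succAbove j)) (p (Fin.cons (y i) x) w))

set_option linter.unusedSectionVars false
section NPreLieAux

open Finset Equiv

variable {K : Type*} [Field K] {g : Type*} [AddCommGroup g] [Module K g] {m : ℕ}
variable {p : (Fin (m + 1) → g) → g → g}

private lemma update_comp_self (y : Fin (m + 2) → g) (i : Fin (m + 2)) (c : g) :
    (fun j => Function.update y i c (i.succAbove j)) = fun j => y (i.succAbove j) := by
  funext j; exact Function.update_of_ne (Fin.succAbove_ne i j) c y

private lemma update_comp (y : Fin (m + 2) → g) (i : Fin (m + 2)) (j : Fin (m + 1)) (c : g) :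
    (fun j' => Function.update y (i.succAbove j) c (i.succAbove j')) =
      Function.update (fun j' => y (i.succAbove j')) j c := by
  funext j'
  rcases eq_or_ne j' j with rfl | h
  · simp
  · rw [Function.update_of_ne (Fin.succAbove_right_injective.ne h),
      Function.update_of_ne h]

private lemma snoc_comp_castSucc (x : Fin (m + 1) → g) (w : g) (a : Fin (m + 1)) :
    (fun j => (Fin.snoc x w : Fin (m + 2) → g) ((Fin.castSucc a).succAbove j)) =
      (Fin.snoc (fun j : Fin m => x (a.succAbove j)) w : Fin (m + 1) → g) := by
  funext j
  cases j using Fin.lastCases with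
  | last =>
    simp [Fin.succAbove_castSucc_of_le a (Fin.last m) (Fin.le_last a), Fin.succ_last]
  | cast j =>
    simp [Fin.castSucc_succAbove_castSucc]

private lemma preC_snoc (x : Fin (m + 1) → g) (w : g) :
    preC K p (Fin.snoc x w) =
      (∑ a : Fin (m + 1), ((-1 : ℤ) ^ ((m + 1) - (a : ℕ))) •
          p (Fin.snoc (fun j : Fin m => x (a.succAbove j)) w) (x a)) + p x w := by
  simp only [preC]
  rw [Fin.sum_univ_castSucc]
  congr 1
  · refine Finset.sum_congr rfl fun a _ => ?_
    rw [Fin.coe_castSucc, snoc_comp_castSucc, Fin.snoc_castSucc]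
  · simp [Fin.succAbove_last]

private lemma snoc_rotate (hskew : ∀ z : g, SkewOn (fun x : Fin (m + 1) → g => p x z))
    (u : Fin m → g) (c : g) (w : g) :
    p (Fin.snoc u c) w = ((-1 : ℤ) ^ m) • p (Fin.cons c u) w := by
  have h2 : (Fin.snoc u c : Fin (m + 1) → g) ∘ ⇑((Fin.cycleRange (Fin.last m)).symm)
      = Fin.cons c u := by
    funext j
    cases j using Fin.cases with
    | zero =>
      rw [Function.comp_apply, Fin.cycleRange_symm_zero, Fin.snoc_last, Fin.cons_zero]
    | succ j =>
      rw [Function.comp_apply, Fin.cycleRange_symm_succ, Fin.succAbove_last_apply,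
        Fin.snoc_castSucc, Fin.cons_succ]
  have h1 : Fin.snoc u c = (Fin.cons c u : Fin (m + 1) → g) ∘ ⇑(Fin.cycleRange (Fin.last m)) := by
    funext k
    conv_lhs => rw [← Equiv.symm_apply_apply (Fin.cycleRange (Fin.last m)) k]
    exact congrFun h2 ((Fin.last m).cycleRange k)
  rw [h1]
  refine (hskew w (Fin.cons c u) (Fin.cycleRange (Fin.last m))).trans ?_
  norm_num [Fin.sign_cycleRange, Fin.val_last, Units.val_pow_eq_pow_val]

private lemma snoc_preC (hadd : ∀ (x : Fin (m + 1) → g) (a b : g), p x (a + b) = p x a + p x b)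
    (hskew : ∀ z : g, SkewOn (fun x : Fin (m + 1) → g => p x z))
    (hax6 : ∀ (x : Fin m → g) (w : g) (y : Fin (m + 2) → g),
      p (Fin.cons (preC K p y) x) w =
        ∑ i : Fin (m + 2), ((-1 : ℤ) ^ ((m + 1) - (i : ℕ))) •
          p (fun j => y (i.succAbove j)) (p (Fin.cons (y i) x) w))
    (u : Fin m → g) (w : g) (y : Fin (m + 2) → g) :
    p (Fin.snoc u (preC K p y)) w =
      ∑ i : Fin (m + 2), ((-1 : ℤ) ^ ((m + 1) - (i : ℕ))) •
        p (fun j => y (i.succAbove j)) (p (Fin.snoc u (y i)) w) := by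
  have hz : ∀ (v : Fin (m + 1) → g) (n : ℤ) (a : g), p v (n • a) = n • p v a := fun v n a =>
    map_zsmul (AddMonoidHom.mk' (p v) (hadd v)) n a
  have hpow : ((-1 : ℤ) ^ m * (-1) ^ m) = 1 := by
    rw [← pow_add]; exact Even.neg_one_pow ⟨m, rfl⟩
  rw [snoc_rotate hskew, hax6, Finset.smul_sum]
  refine Finset.sum_congr rfl fun i _ => ?_
  have h2 : p (Fin.cons (y i) u) w = ((-1 : ℤ) ^ m) • p (Fin.snoc u (y i)) w := by
    rw [snoc_rotate hskew, smul_smul, hpow, one_smul]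
  rw [h2, hz, smul_smul, smul_smul]
  congr 1
  linear_combination ((-1 : ℤ) ^ ((m + 1) - (i : ℕ))) * hpow

private lemma preC_multilinear (hp1 : ∀ z : g, MultiLinearOn K (fun x => p x z))
    (hadd : ∀ (x : Fin (m + 1) → g) (a b : g), p x (a + b) = p x a + p x b)
    (hsmul : ∀ (x : Fin (m + 1) → g) (c : K) (a : g), p x (c • a) = c • p x a) :
    MultiLinearOn K (preC K p) := by
  constructor
  · intro y i a b
    simp only [preC, ← Finset.sum_add_distrib]
    refine Finset.sum_congr rfl fun k _ => ?_
    rcases eq_or_ne k i with rfl | hk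
    · rw [update_comp_self, update_comp_self, update_comp_self,
        Function.update_self, Function.update_self, Function.update_self, hadd, smul_add]
    · obtain ⟨j, hj⟩ := Fin.exists_succAbove_eq (Ne.symm hk)
      subst hj
      rw [update_comp, update_comp, update_comp]
      simp only [Function.update_of_ne (Ne.symm (Fin.succAbove_ne k j))]
      rw [← smul_add]
      exact congrArg (_ • ·) ((hp1 (y k)).1 (fun j' => y (k.succAbove j')) j a b)
  · intro y i c a
    simp only [preC, Finset.smul_sum]
    refine Finset.sum_congr rfl fun k _ => ?_
    rcases eq_or_ne k i with rfl | hk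
    · rw [update_comp_self, update_comp_self,
        Function.update_self, Function.update_self, hsmul, smul_comm]
    · obtain ⟨j, hj⟩ := Fin.exists_succAbove_eq (Ne.symm hk)
      subst hj
      rw [update_comp, update_comp]
      simp only [Function.update_of_ne (Ne.symm (Fin.succAbove_ne k j))]
      rw [smul_comm]
      exact congrArg (_ • ·) ((hp1 (y k)).2 (fun j' => y (k.succAbove j')) j c a)

private lemma p_perm_fix_zero
    (hskew : ∀ z : g, SkewOn (fun x : Fin (m + 1) → g => p x z))
    (z : Fin (m + 2) → g) (τ : Equiv.Perm (Fin (m + 2))) (h0 : τ 0 = 0) :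
    p (fun j => z (τ j.succ)) (z (τ 0)) =
      ((Equiv.Perm.sign τ : ℤˣ) : ℤ) • p (fun j => z j.succ) (z 0) := by
  rcases h : Equiv.Perm.decomposeFin τ with ⟨a, e⟩
  have hτ : Equiv.Perm.decomposeFin.symm (a, e) = τ := by
    rw [← h]; exact Equiv.symm_apply_apply _ _
  have ha : a = 0 := by
    rw [← hτ, Equiv.Perm.decomposeFin_symm_apply_zero] at h0; exact h0
  subst ha
  have happ : ∀ j : Fin (m + 1), τ j.succ = (e j).succ := by
    intro j
    rw [← hτ, Equiv.Perm.decomposeFin_symm_apply_succ]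
    simp
  have hsign : Equiv.Perm.sign τ = Equiv.Perm.sign e := by
    rw [← hτ, Equiv.Perm.decomposeFin.symm_sign, if_pos rfl, one_mul]
  rw [h0, hsign]
  have h1 : (fun j => z (τ j.succ)) = (fun j => z j.succ) ∘ ⇑e := by
    funext j; rw [happ]; rfl
  rw [h1]
  exact hskew (z 0) (fun j => z j.succ) e

private lemma preC_skew
    (hskew : ∀ z : g, SkewOn (fun x : Fin (m + 1) → g => p x z)) :
    SkewOn (preC K p) := by
  intro y σ
  simp only [preC]
  rw [Finset.smul_sum,
    ← Equiv.sum_comp σ (fun k => ((Equiv.Perm.sign σ : ℤˣ) : ℤ) •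
      (((-1 : ℤ) ^ ((m + 1) - (k : ℕ))) • p (fun j => y (k.succAbove j)) (y k)))]
  refine Finset.sum_congr rfl fun i _ => ?_
  set τ : Equiv.Perm (Fin (m + 2)) :=
    ((Fin.cycleRange i).symm.trans σ).trans (Fin.cycleRange (σ i)) with hτdef
  have hτ0 : τ 0 = 0 := by
    simp [hτdef, Fin.cycleRange_symm_zero, Fin.cycleRange_self]
  have key := p_perm_fix_zero hskew (y ∘ ⇑(Fin.cycleRange (σ i)).symm) τ hτ0
  simp only [hτdef, Equiv.trans_apply, Function.comp_apply, Equiv.symm_apply_apply,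
    Fin.cycleRange_symm_succ, Fin.cycleRange_symm_zero, Fin.cycleRange_self] at key
  simp only [Function.comp_apply]
  rw [key, smul_smul, smul_smul]
  congr 1
  have hsτ : ((Equiv.Perm.sign τ : ℤˣ) : ℤ) =
      (-1 : ℤ) ^ ((σ i : Fin (m + 2)) : ℕ) * ((Equiv.Perm.sign σ : ℤˣ) : ℤ) *
        (-1 : ℤ) ^ (i : ℕ) := by
    have hmul : τ = (Fin.cycleRange (σ i)) * σ * (Fin.cycleRange i).symm := rfl
    rw [hmul, map_mul, map_mul, Equiv.Perm.sign_symm, Fin.sign_cycleRange, Fin.sign_cycleRange]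
    simp [Units.val_mul]
  rw [hsτ]
  have hb : (-1 : ℤ) ^ ((σ i : Fin (m + 2)) : ℕ) * (-1 : ℤ) ^ ((σ i : Fin (m + 2)) : ℕ) = 1 := by
    rw [← pow_add]; exact Even.neg_one_pow ⟨_, rfl⟩
  have e1 : (-1 : ℤ) ^ ((m + 1) - (i : ℕ)) * (-1 : ℤ) ^ (i : ℕ) = (-1 : ℤ) ^ (m + 1) := by
    rw [← pow_add, Nat.sub_add_cancel (Nat.lt_succ_iff.mp i.isLt)]
  have e2 : (-1 : ℤ) ^ ((m + 1) - ((σ i : Fin (m + 2)) : ℕ)) *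
      (-1 : ℤ) ^ ((σ i : Fin (m + 2)) : ℕ) = (-1 : ℤ) ^ (m + 1) := by
    rw [← pow_add, Nat.sub_add_cancel (Nat.lt_succ_iff.mp (σ i).isLt)]
  calc (-1 : ℤ) ^ ((m + 1) - (i : ℕ)) *
        ((-1 : ℤ) ^ ((σ i : Fin (m + 2)) : ℕ) * ((Equiv.Perm.sign σ : ℤˣ) : ℤ) *
          (-1 : ℤ) ^ (i : ℕ))
      = ((-1 : ℤ) ^ ((m + 1) - (i : ℕ)) * (-1 : ℤ) ^ (i : ℕ)) *
          (-1 : ℤ) ^ ((σ i : Fin (m + 2)) : ℕ) * ((Equiv.Perm.sign σ : ℤˣ) : ℤ) := by ring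
    _ = (-1 : ℤ) ^ (m + 1) * (-1 : ℤ) ^ ((σ i : Fin (m + 2)) : ℕ) *
          ((Equiv.Perm.sign σ : ℤˣ) : ℤ) := by rw [e1]
    _ = ((-1 : ℤ) ^ ((m + 1) - ((σ i : Fin (m + 2)) : ℕ)) *
          (-1 : ℤ) ^ ((σ i : Fin (m + 2)) : ℕ)) * (-1 : ℤ) ^ ((σ i : Fin (m + 2)) : ℕ) *
          ((Equiv.Perm.sign σ : ℤˣ) : ℤ) := by rw [e2]
    _ = (-1 : ℤ) ^ ((m + 1) - ((σ i : Fin (m + 2)) : ℕ)) *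
          ((-1 : ℤ) ^ ((σ i : Fin (m + 2)) : ℕ) * (-1 : ℤ) ^ ((σ i : Fin (m + 2)) : ℕ)) *
          ((Equiv.Perm.sign σ : ℤˣ) : ℤ) := by ring
    _ = ((Equiv.Perm.sign σ : ℤˣ) : ℤ) * (-1 : ℤ) ^ ((m + 1) - ((σ i : Fin (m + 2)) : ℕ)) := by
          rw [hb]; ring

private lemma preC_filippov
    (hadd : ∀ (x : Fin (m + 1) → g) (a b : g), p x (a + b) = p x a + p x b)
    (hskew : ∀ z : g, SkewOn (fun x : Fin (m + 1) → g => p x z))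
    (hax5 : ∀ (x y : Fin (m + 1) → g) (z : g),
      p x (p y z) =
        (∑ i : Fin (m + 1), p (Function.update y i (preC K p (Fin.snoc x (y i)))) z) +
          p y (p x z))
    (hax6 : ∀ (x : Fin m → g) (w : g) (y : Fin (m + 2) → g),
      p (Fin.cons (preC K p y) x) w =
        ∑ i : Fin (m + 2), ((-1 : ℤ) ^ ((m + 1) - (i : ℕ))) •
          p (fun j => y (i.succAbove j)) (p (Fin.cons (y i) x) w)) :
    ∀ (x : Fin (m + 1) → g) (y : Fin (m + 2) → g),
      preC K p (Fin.snoc x (preC K p y)) =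
        ∑ i : Fin (m + 2), preC K p (Function.update y i (preC K p (Fin.snoc x (y i)))) := by
  intro x y
  have hz : ∀ (v : Fin (m + 1) → g) (n : ℤ) (a : g), p v (n • a) = n • p v a := fun v n a =>
    map_zsmul (AddMonoidHom.mk' (p v) (hadd v)) n a
  have hsum : ∀ (v : Fin (m + 1) → g) (f : Fin (m + 2) → g),
      p v (∑ i : Fin (m + 2), f i) = ∑ i : Fin (m + 2), p v (f i) := fun v f =>
    map_sum (AddMonoidHom.mk' (p v) (hadd v)) f Finset.univ
  have hsum' : ∀ (v : Fin (m + 1) → g) (f : Fin (m + 1) → g),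
      p v (∑ a : Fin (m + 1), f a) = ∑ a : Fin (m + 1), p v (f a) := fun v f =>
    map_sum (AddMonoidHom.mk' (p v) (hadd v)) f Finset.univ
  -- Step 1 : expand the left-hand side
  have hL : preC K p (Fin.snoc x (preC K p y)) =
      (∑ a : Fin (m + 1), ∑ i : Fin (m + 2),
          ((-1 : ℤ) ^ ((m + 1) - (a : ℕ))) • ((-1 : ℤ) ^ ((m + 1) - (i : ℕ))) •
            p (fun j => y (i.succAbove j))
              (p (Fin.snoc (fun j : Fin m => x (a.succAbove j)) (y i)) (x a)))
        + p x (preC K p y) := by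
    rw [preC_snoc]
    congr 1
    refine Finset.sum_congr rfl fun a _ => ?_
    rw [snoc_preC hadd hskew hax6, Finset.smul_sum]
  -- Step 2 : expand p x (preC y) using axiom (1)
  have hC : p x (preC K p y) =
      (∑ i : Fin (m + 2), ((-1 : ℤ) ^ ((m + 1) - (i : ℕ))) •
          ∑ j : Fin (m + 1),
            p (Function.update (fun j' => y (i.succAbove j')) j
                (preC K p (Fin.snoc x (y (i.succAbove j))))) (y i))
        + ∑ i : Fin (m + 2), ((-1 : ℤ) ^ ((m + 1) - (i : ℕ))) •
            p (fun j => y (i.succAbove j)) (p x (y i)) := by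
    conv_lhs => rw [preC]
    rw [hsum, ← Finset.sum_add_distrib]
    refine Finset.sum_congr rfl fun i _ => ?_
    rw [hz, hax5 x (fun j' => y (i.succAbove j')) (y i), smul_add]
  -- Step 3 : expand each summand of the right-hand side
  have hR : ∀ i : Fin (m + 2),
      preC K p (Function.update y i (preC K p (Fin.snoc x (y i)))) =
        ((-1 : ℤ) ^ ((m + 1) - (i : ℕ))) •
            p (fun j => y (i.succAbove j)) (preC K p (Fin.snoc x (y i)))
          + ∑ j : Fin (m + 1), ((-1 : ℤ) ^ ((m + 1) - ((i.succAbove j : Fin (m + 2)) : ℕ))) •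
              p (fun j' => Function.update y i (preC K p (Fin.snoc x (y i)))
                  ((i.succAbove j).succAbove j')) (y (i.succAbove j)) := by
    intro i
    conv_lhs => rw [preC]
    rw [Fin.sum_univ_succAbove _ i]
    congr 1
    · rw [update_comp_self, Function.update_self]
    · refine Finset.sum_congr rfl fun j _ => ?_
      rw [Function.update_of_ne (Fin.succAbove_ne i j)]
  -- the matrix of mixed terms
  set F : Fin (m + 2) → Fin (m + 2) → g := fun a b =>
    if a = b then 0 else ((-1 : ℤ) ^ ((m + 1) - (b : ℕ))) •
      p (fun j' => Function.update y a (preC K p (Fin.snoc x (y a))) (b.succAbove j')) (y b)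
    with hF
  have hFii : ∀ i : Fin (m + 2), F i i = 0 := by
    intro i; simp only [hF]; simp
  have hTL : ∀ i : Fin (m + 2),
      ((-1 : ℤ) ^ ((m + 1) - (i : ℕ))) •
        (∑ j : Fin (m + 1),
          p (Function.update (fun j' => y (i.succAbove j')) j
              (preC K p (Fin.snoc x (y (i.succAbove j))))) (y i))
        = ∑ k : Fin (m + 2), F k i := by
    intro i
    rw [Fin.sum_univ_succAbove (fun k => F k i) i, hFii, zero_add, Finset.smul_sum]
    refine Finset.sum_congr rfl fun j _ => ?_
    simp only [hF]
    rw [if_neg (Fin.succAbove_ne i j), update_comp]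
  have hTR : ∀ i : Fin (m + 2),
      (∑ j : Fin (m + 1), ((-1 : ℤ) ^ ((m + 1) - ((i.succAbove j : Fin (m + 2)) : ℕ))) •
          p (fun j' => Function.update y i (preC K p (Fin.snoc x (y i)))
              ((i.succAbove j).succAbove j')) (y (i.succAbove j)))
        = ∑ k : Fin (m + 2), F i k := by
    intro i
    rw [Fin.sum_univ_succAbove (fun k => F i k) i, hFii, zero_add]
    refine Finset.sum_congr rfl fun j _ => ?_
    simp only [hF]
    rw [if_neg (Ne.symm (Fin.succAbove_ne i j))]
  -- Step 4 : expand the first parts of the right-hand side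
  have hS4 : (∑ i : Fin (m + 2), ((-1 : ℤ) ^ ((m + 1) - (i : ℕ))) •
        p (fun j => y (i.succAbove j)) (preC K p (Fin.snoc x (y i))))
      = (∑ i : Fin (m + 2), ∑ a : Fin (m + 1),
          ((-1 : ℤ) ^ ((m + 1) - (i : ℕ))) • ((-1 : ℤ) ^ ((m + 1) - (a : ℕ))) •
            p (fun j => y (i.succAbove j))
              (p (Fin.snoc (fun j : Fin m => x (a.succAbove j)) (y i)) (x a)))
        + ∑ i : Fin (m + 2), ((-1 : ℤ) ^ ((m + 1) - (i : ℕ))) •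
            p (fun j => y (i.succAbove j)) (p x (y i)) := by
    rw [← Finset.sum_add_distrib]
    refine Finset.sum_congr rfl fun i _ => ?_
    have hBi : p (fun j => y (i.succAbove j)) (preC K p (Fin.snoc x (y i))) =
        (∑ a : Fin (m + 1), ((-1 : ℤ) ^ ((m + 1) - (a : ℕ))) •
          p (fun j => y (i.succAbove j))
            (p (Fin.snoc (fun j : Fin m => x (a.succAbove j)) (y i)) (x a)))
        + p (fun j => y (i.succAbove j)) (p x (y i)) := by
      rw [preC_snoc x (y i), hadd, hsum']
      congr 1
      exact Finset.sum_congr rfl fun a _ => hz _ _ _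
    rw [hBi, smul_add, Finset.smul_sum]
  -- Step 5 : commute the double sums
  have hXc : (∑ a : Fin (m + 1), ∑ i : Fin (m + 2),
        ((-1 : ℤ) ^ ((m + 1) - (a : ℕ))) • ((-1 : ℤ) ^ ((m + 1) - (i : ℕ))) •
          p (fun j => y (i.succAbove j))
            (p (Fin.snoc (fun j : Fin m => x (a.succAbove j)) (y i)) (x a)))
      = ∑ i : Fin (m + 2), ∑ a : Fin (m + 1),
          ((-1 : ℤ) ^ ((m + 1) - (i : ℕ))) • ((-1 : ℤ) ^ ((m + 1) - (a : ℕ))) •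
            p (fun j => y (i.succAbove j))
              (p (Fin.snoc (fun j : Fin m => x (a.succAbove j)) (y i)) (x a)) := by
    rw [Finset.sum_comm]
    exact Finset.sum_congr rfl fun i _ => Finset.sum_congr rfl fun a _ => smul_comm _ _ _
  have hFc : (∑ i : Fin (m + 2), ∑ k : Fin (m + 2), F k i)
      = ∑ i : Fin (m + 2), ∑ k : Fin (m + 2), F i k := Finset.sum_comm
  rw [hL, hC,
    show (∑ i : Fin (m + 2), preC K p (Function.update y i (preC K p (Fin.snoc x (y i)))))
      = _ from Finset.sum_congr rfl fun i _ => hR i,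
    Finset.sum_add_distrib, hS4, hXc,
    show (∑ i : Fin (m + 2), ((-1 : ℤ) ^ ((m + 1) - (i : ℕ))) •
        ∑ j : Fin (m + 1),
          p (Function.update (fun j' => y (i.succAbove j')) j
              (preC K p (Fin.snoc x (y (i.succAbove j))))) (y i))
      = _ from Finset.sum_congr rfl fun i _ => hTL i,
    show (∑ i : Fin (m + 2), ∑ j : Fin (m + 1),
        ((-1 : ℤ) ^ ((m + 1) - ((i.succAbove j : Fin (m + 2)) : ℕ))) •
          p (fun j' => Function.update y i (preC K p (Fin.snoc x (y i)))
              ((i.succAbove j).succAbove j')) (y (i.succAbove j)))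
      = _ from Finset.sum_congr rfl fun i _ => hTR i,
    hFc]
  abel

end NPreLieAux


/-- If `(g, {-,...,-})` is an `n`-pre-Lie algebra (`n = m+2`), then the induced
bracket `[x₁,...,xₙ]_C = Σᵢ (-1)^{n-i} {x₁,...,x̂ᵢ,...,xₙ,xᵢ}` defines an `n`-Lie algebra
structure on `g`. -/
theorem n_pre_lie_gives_n_lie {K : Type*} [Field K] [CharZero K] {g : Type*}
    [AddCommGroup g] [Module K g] {m : ℕ} (p : (Fin (m + 1) → g) → g → g)
    (hp : IsNPreLie K p) :
    IsNLie K (preC K p) := by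
  obtain ⟨hp1, hadd, hsmul, hskew, hax5, hax6⟩ := hp
  exact ⟨preC_multilinear hp1 hadd hsmul, preC_skew hskew, preC_filippov hadd hskew hax5 hax6⟩
end

section
/- Let T: V → g be a relative Rota-Baxter operator on an n-LieRep pair (g,ρ). Then the bracket {u1,...,un}_T := ρ(Tu1,...,Tu_{n−1})(un) defines an n-pre-Lie algebra structure on V. -/
section AuxRBO

variable {K : Type*} [Field K] {g V : Type*}
    [AddCommGroup g] [Module K g] [AddCommGroup V] [Module K V] {m : ℕ}

private lemma snoc_comp_finRotate_symm {α : Type*} {k : ℕ} (x : Fin k → α) (a : α) :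
    (Fin.snoc x a : Fin (k+1) → α) ∘ ⇑(finRotate (k+1)).symm = Fin.cons a x := by
  funext j
  induction j using Fin.cases with
  | zero =>
    have h : (finRotate (k+1)).symm 0 = Fin.last k := by
      rw [Equiv.symm_apply_eq, finRotate_last]
    simp [Function.comp, h]
  | succ i =>
    have h : (finRotate (k+1)).symm i.succ = i.castSucc := by
      rw [Equiv.symm_apply_eq, finRotate_succ_apply, Fin.coeSucc_eq_succ]
    simp [Function.comp, h]

set_option linter.unusedSectionVars false in
private lemma rho_cons {h : Type*} [AddCommGroup h] (ρ : (Fin (m+1) → g) → h)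
    (hskew : SkewOn ρ) (X : Fin m → g) (a : g) :
    ρ (Fin.cons a X) = ((-1:ℤ)^m) • ρ (Fin.snoc X a) := by
  have hs := hskew (Fin.snoc X a) (finRotate (m+1)).symm
  rw [snoc_comp_finRotate_symm] at hs
  rw [hs, Equiv.Perm.sign_symm, sign_finRotate]
  norm_num

private lemma T_update (T : V →ₗ[K] g) {k : ℕ} (x : Fin k → V) (i : Fin k) (v : V) :
    (fun j => T (Function.update x i v j)) = Function.update (fun j => T (x j)) i (T v) := by
  funext j
  simp [Function.update_apply, apply_ite (⇑T)]

private lemma T_snoc (T : V →ₗ[K] g) {k : ℕ} (x : Fin k → V) (a : V) :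
    (fun j => T ((Fin.snoc x a : Fin (k+1) → V) j))
      = (Fin.snoc (fun j => T (x j)) (T a) : Fin (k+1) → g) := by
  have h := Fin.comp_snoc (⇑T) x a
  exact h

private lemma T_cons (T : V →ₗ[K] g) {k : ℕ} (a : V) (x : Fin k → V) :
    (fun j => T ((Fin.cons a x : Fin (k+1) → V) j))
      = (Fin.cons (T a) (fun j => T (x j)) : Fin (k+1) → g) := by
  have h := Fin.comp_cons (⇑T) a x
  exact h

end AuxRBO

/-- Let `T : V → g` be a relative Rota-Baxter operator on an `n`-LieRep pair
`(g, ρ)` (`n = m+2`).  Then `{u₁,...,uₙ}_T := ρ(Tu₁,...,Tu_{n-1})(uₙ)` defines an `n`-pre-Lie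
algebra structure on `V`. -/
theorem rbo_gives_n_pre_lie {K : Type*} [Field K] {g V : Type*}
    [AddCommGroup g] [Module K g] [AddCommGroup V] [Module K V] {m : ℕ}
    (br : (Fin (m + 2) → g) → g) (ρ : (Fin (m + 1) → g) → Module.End K V)
    (T : V →ₗ[K] g) (hg : IsNLie K br) (hρ : IsRep K br ρ) (hT : IsRBO K br ρ T) :
    IsNPreLie K (fun (u : Fin (m + 1) → V) (z : V) => ρ (fun j => T (u j)) z) := by
  obtain ⟨⟨hadd, hsmul⟩, hskew, hcomm, hstr⟩ := hρ
  set P : (Fin (m + 1) → V) → V → V := fun u z => ρ (fun j => T (u j)) z with hP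
  have hPa : ∀ (u : Fin (m + 1) → V) (zz : V), P u zz = ρ (fun j => T (u j)) zz :=
    fun _ _ => rfl
  have hTpre : ∀ v : Fin (m + 2) → V,
      T (preC K P v) = br (fun i => T (v i)) := by
    intro v
    simp only [preC, hP, map_sum, map_zsmul]
    exact (hT v).symm
  refine ⟨?_, ?_, ?_, ?_, ?_, ?_⟩
  · -- multilinearity in the first m+1 slots
    intro z
    constructor
    · intro x i a b
      simp only [hPa, T_update, map_add]
      rw [hadd]
      simp [LinearMap.add_apply]
    · intro x i c a
      simp only [hPa, T_update, map_smul]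
      rw [hsmul]
      simp [LinearMap.smul_apply]
  · intro x a b
    simp only [hPa, map_add]
  · intro x c a
    simp only [hPa, map_smul]
  · -- skew-symmetry
    intro z x σ
    have hx : (fun j => T ((x ∘ σ) j)) = (fun j => T (x j)) ∘ σ := rfl
    simp only [hPa]
    rw [hx, hskew]
    simp [LinearMap.smul_apply]
  · -- the first n-pre-Lie identity
    intro x y z
    have key := hcomm (fun j => T (x j)) (fun j => T (y j))
    have e1 : ρ (fun j => T (x j)) (ρ (fun j => T (y j)) z)
          - ρ (fun j => T (y j)) (ρ (fun j => T (x j)) z)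
        = ∑ i : Fin (m + 1),
            ρ (Function.update (fun j => T (y j)) i
                (br (Fin.snoc (fun j => T (x j)) (T (y i))))) z := by
      have h2 := congrArg (fun A : Module.End K V => A z) key
      simpa [LinearMap.sub_apply, Module.End.mul_apply, LinearMap.sum_apply] using h2
    have e3 : ∀ i : Fin (m + 1),
        P (Function.update y i (preC K P (Fin.snoc x (y i)))) z
          = ρ (Function.update (fun j => T (y j)) i
              (br (Fin.snoc (fun j => T (x j)) (T (y i))))) z := by
      intro i
      rw [hPa, T_update, hTpre, T_snoc]
    simp only [e3]
    simp only [hPa]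
    exact sub_eq_iff_eq_add.mp e1
  · -- the second n-pre-Lie identity
    intro x w y
    simp only [hPa]
    rw [T_cons, hTpre y, rho_cons ρ hskew, LinearMap.smul_apply]
    have hst := hstr (fun j => T (x j)) (fun i => T (y i))
    have hst2 := congrArg (fun A : Module.End K V => A w) hst
    simp only [LinearMap.sum_apply, LinearMap.smul_apply, Module.End.mul_apply] at hst2
    rw [hst2, Finset.smul_sum]
    refine Finset.sum_congr rfl ?_
    intro i _
    rw [smul_comm]
    congr 1
    have hc : ρ (fun j => T ((Fin.cons (y i) x : Fin (m + 1) → V) j)) w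
        = ((-1:ℤ)^m) • ρ (Fin.snoc (fun j => T (x j)) (T (y i))) w := by
      rw [T_cons, rho_cons ρ hskew, LinearMap.smul_apply]
    rw [hc, map_zsmul]
end

section
/- Let T be a relative Rota-Baxter operator on an n-LieRep pair (g,ρ). Define ρ_T: Λ^{n−1}V → gl(g) by ρ_T(u1,...,u_{n−1})x = [Tu1,...,Tu_{n−1},x]_g − Σ_{i=1}^{n−1}(−1)^{n−i} T(ρ(Tu1,...,T̂ui,...,Tu_{n−1},x)(ui)). Then (g;ρ_T) is a representation of the n-Lie algebra (V,[-,...,-]_T). -/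
set_option linter.unusedSectionVars false
set_option linter.unusedVariables false
section Aux
section SkewAux

variable {α h : Type*} [AddCommGroup h]

lemma skewOn_comp_mul {k : ℕ} {f : (Fin k → α) → h} (x : Fin k → α)
    (σ τ : Equiv.Perm (Fin k)) : x ∘ (σ * τ) = (x ∘ σ) ∘ τ := rfl

lemma skewOn_of_adjacent {k : ℕ} {f : (Fin (k + 1) → α) → h}
    (H : ∀ (x : Fin (k + 1) → α) (r : Fin k),
      f (x ∘ Equiv.swap r.castSucc r.succ) = - f x) :
    SkewOn f := by
  -- adjacent (by values) swaps
  have adj : ∀ (i j : Fin (k + 1)), (j : ℕ) = (i : ℕ) + 1 →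
      ∀ x : Fin (k + 1) → α, f (x ∘ Equiv.swap i j) = - f x := by
    intro i j hij x
    have hi : (i : ℕ) < k := by omega
    have h1 : (⟨(i : ℕ), hi⟩ : Fin k).castSucc = i := by
      ext; simp
    have h2 : (⟨(i : ℕ), hi⟩ : Fin k).succ = j := by
      ext; simp [hij]
    rw [← h1, ← h2]
    exact H x _
  -- all swaps
  have key : ∀ (d : ℕ) (i j : Fin (k + 1)), (j : ℕ) = (i : ℕ) + d + 1 →
      ∀ x : Fin (k + 1) → α, f (x ∘ Equiv.swap i j) = - f x := by
    intro d
    induction d with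
    | zero => intro i j hij x; exact adj i j (by omega) x
    | succ d ih =>
      intro i j hij x
      have hjk : (j : ℕ) ≤ k := Nat.lt_succ_iff.mp j.isLt
      set j' : Fin (k + 1) := ⟨(i : ℕ) + d + 1, by omega⟩ with hj'
      have hij' : i ≠ j' := by
        intro hcon
        have := congrArg Fin.val hcon
        simp [hj'] at this; omega
      have hjj' : j ≠ j' := by
        intro hcon
        have := congrArg Fin.val hcon
        simp [hj'] at this; omega
      have hji : j ≠ i := by
        intro hcon
        have := congrArg Fin.val hcon
        omega
      have hsw : Equiv.swap j' i * Equiv.swap j j' * Equiv.swap j' i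
          = Equiv.swap i j := by
        rw [Equiv.swap_comm j' i]
        have := Equiv.swap_mul_swap_mul_swap (x := j) (y := j') (z := i) hjj' hji
        rw [Equiv.swap_comm i j', this, Equiv.swap_comm]
      have hc : x ∘ Equiv.swap i j
          = ((x ∘ Equiv.swap j' i) ∘ Equiv.swap j j') ∘ Equiv.swap j' i := by
        rw [← hsw]; rfl
      have e3 : f (((x ∘ Equiv.swap j' i) ∘ Equiv.swap j j') ∘ Equiv.swap j' i)
          = - f ((x ∘ Equiv.swap j' i) ∘ Equiv.swap j j') := by
        rw [Equiv.swap_comm j' i]; exact ih i j' (by simp [hj']) _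
      have e2 : f ((x ∘ Equiv.swap j' i) ∘ Equiv.swap j j')
          = - f (x ∘ Equiv.swap j' i) := by
        rw [Equiv.swap_comm j j']; exact adj j' j (by simp [hj']; omega) _
      have e1 : f (x ∘ Equiv.swap j' i) = - f x := by
        rw [Equiv.swap_comm j' i]; exact ih i j' (by simp [hj']) x
      rw [hc, e3, e2, e1]; simp
  have swaps : ∀ (i j : Fin (k + 1)), i ≠ j →
      ∀ x : Fin (k + 1) → α, f (x ∘ Equiv.swap i j) = - f x := by
    intro i j hij x
    rcases Nat.lt_or_ge (i : ℕ) (j : ℕ) with hlt | hge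
    · exact key ((j : ℕ) - (i : ℕ) - 1) i j (by omega) x
    · have hlt : (j : ℕ) < (i : ℕ) := by
        rcases Nat.lt_or_ge (j : ℕ) (i : ℕ) with h' | h'
        · exact h'
        · exact absurd (Fin.ext (by omega)) hij
      rw [Equiv.swap_comm]
      exact key ((i : ℕ) - (j : ℕ) - 1) j i (by omega) x
  suffices H2 : ∀ (σ : Equiv.Perm (Fin (k + 1))) (x : Fin (k + 1) → α),
      f (x ∘ σ) = ((Equiv.Perm.sign σ : ℤˣ) : ℤ) • f x by
    intro x σ; exact H2 σ x
  intro σ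
  refine Equiv.Perm.swap_induction_on σ (fun x => by
    simp [show x ∘ (1 : Equiv.Perm (Fin (k+1))) = x from rfl]) ?_
  intro τ a b hab ih x
  rw [skewOn_comp_mul (f := f), ih, swaps a b hab, Equiv.Perm.sign_mul,
    Equiv.Perm.sign_swap hab]
  simp [smul_smul]

end SkewAux
section RotAux

variable {α h : Type*} [AddCommGroup h]

lemma insertNth_castSucc_eq_comp_swap {k : ℕ} (i : Fin k) (c : α)
    (p : Fin k → α) :
    (Fin.insertNth i.castSucc c p : Fin (k + 1) → α)
      = (Fin.insertNth i.succ c p) ∘ Equiv.swap i.castSucc i.succ := by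
  funext t
  rcases eq_or_ne t i.castSucc with rfl | h1
  · simp [Equiv.swap_apply_left]
  rcases eq_or_ne t i.succ with rfl | h2
  · simp only [Function.comp_apply, Equiv.swap_apply_right]
    have L : (Fin.insertNth i.castSucc c p : Fin (k + 1) → α) i.succ = p i := by
      conv_lhs => rw [show (i.succ : Fin (k + 1)) = i.castSucc.succAbove i from
        (Fin.succAbove_castSucc_self i).symm]
      exact Fin.insertNth_apply_succAbove _ _ _ _
    have R : (Fin.insertNth i.succ c p : Fin (k + 1) → α) i.castSucc = p i := by
      conv_lhs => rw [show (i.castSucc : Fin (k + 1)) = i.succ.succAbove i from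
        (Fin.succAbove_of_castSucc_lt _ _ (Fin.castSucc_lt_succ (i := i))).symm]
      exact Fin.insertNth_apply_succAbove _ _ _ _
    rw [L, R]
  · have hfix : Equiv.swap i.castSucc i.succ t = t :=
      Equiv.swap_apply_of_ne_of_ne h1 h2
    simp only [Function.comp_apply, hfix]
    obtain ⟨q, hq⟩ := Fin.exists_succAbove_eq h1
    have hq' : i.succ.succAbove q = t := by
      rw [← hq]
      rcases Nat.lt_or_ge (q : ℕ) (i : ℕ) with hlt | hge
      · rw [Fin.succAbove_castSucc_of_lt _ _ (by exact hlt),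
          Fin.succAbove_of_castSucc_lt _ _ (by simp [Fin.lt_def]; omega)]
      · have hne : (q : ℕ) ≠ (i : ℕ) := by
          intro hcon
          apply h2
          rw [← hq, Fin.succAbove_castSucc_of_le _ _ (by exact (by omega : (i:ℕ) ≤ (q:ℕ)))]
          exact Fin.ext (by simp [hcon])
        rw [Fin.succAbove_castSucc_of_le _ _ (by exact (by omega : (i:ℕ) ≤ (q:ℕ))),
          Fin.succAbove_of_le_castSucc _ _ (by simp [Fin.le_def]; omega)]
    rw [← hq, Fin.insertNth_apply_succAbove, hq, ← hq', Fin.insertNth_apply_succAbove]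

lemma skew_insertNth {k : ℕ} {f : (Fin (k + 1) → α) → h} (hf : SkewOn f)
    (i : Fin (k + 1)) (c : α) (p : Fin k → α) :
    f (Fin.insertNth i c p) = ((-1 : ℤ) ^ (k - (i : ℕ))) • f (Fin.snoc p c) := by
  induction i using Fin.reverseInduction with
  | last =>
    rw [Fin.insertNth_last' c p]
    simp
  | cast i ih =>
    rw [insertNth_castSucc_eq_comp_swap i c p, hf _ (Equiv.swap i.castSucc i.succ),
      Equiv.Perm.sign_swap (by
        intro hcon
        exact absurd (congrArg Fin.val hcon) (by simp)), ih]
    have h1 : (i : ℕ) < k := i.isLt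
    have h2 : k - (i.castSucc : ℕ) = (k - (i.succ : ℕ)) + 1 := by
      simp only [Fin.coe_castSucc, Fin.val_succ]; omega
    rw [h2]
    simp [pow_succ, smul_smul, mul_comm]

lemma skew_update {k : ℕ} {f : (Fin (k + 1) → α) → h} (hf : SkewOn f)
    (y : Fin (k + 1) → α) (i : Fin (k + 1)) (c : α) :
    f (Function.update y i c)
      = ((-1 : ℤ) ^ (k - (i : ℕ))) • f (Fin.snoc (fun j => y (i.succAbove j)) c) := by
  rw [← Fin.insertNth_removeNth]
  exact skew_insertNth hf i c _

lemma skew_snoc_swap {k : ℕ} {f : (Fin (k + 2) → α) → h} (hf : SkewOn f)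
    (x : Fin k → α) (a b : α) :
    f (Fin.snoc (Fin.snoc x a) b) = - f (Fin.snoc (Fin.snoc x b) a) := by
  have hne : (Fin.last (k + 1)) ≠ ((Fin.last k).castSucc : Fin (k + 2)) := by
    intro hcon; exact absurd (congrArg Fin.val hcon) (by simp)
  have hcomp : (Fin.snoc (Fin.snoc x a) b : Fin (k + 2) → α)
      = (Fin.snoc (Fin.snoc x b) a) ∘ Equiv.swap (Fin.last (k + 1)) ((Fin.last k).castSucc) := by
    funext t
    rcases eq_or_ne t (Fin.last (k + 1)) with rfl | h1
    · simp [Equiv.swap_apply_left]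
    rcases eq_or_ne t ((Fin.last k).castSucc) with rfl | h2
    · simp [Equiv.swap_apply_right]
    · have hfix := Equiv.swap_apply_of_ne_of_ne h1 h2
      simp only [Function.comp_apply, hfix]
      -- t = castSucc (castSucc q)
      have h3 : (t : ℕ) < k := by
        have := t.isLt
        rcases Nat.lt_or_ge (t : ℕ) k with h' | h'
        · exact h'
        · exfalso
          rcases Nat.lt_or_ge (t : ℕ) (k + 1) with h'' | h''
          · exact h2 (Fin.ext (by simp; omega))
          · exact h1 (Fin.ext (by simp; omega))
      have h4 : t = ((⟨(t : ℕ), h3⟩ : Fin k).castSucc.castSucc : Fin (k + 2)) :=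
        Fin.ext (by simp)
      rw [h4, Fin.snoc_castSucc, Fin.snoc_castSucc, Fin.snoc_castSucc, Fin.snoc_castSucc]
  rw [hcomp, hf _ _, Equiv.Perm.sign_swap hne]
  simp

end RotAux

section MLAux

variable {K : Type*} [Field K] {α h : Type*} [AddCommGroup α] [Module K α]
  [AddCommGroup h] [Module K h]

lemma ml_snoc_add {k : ℕ} {f : (Fin (k + 1) → α) → h} (hf : MultiLinearOn K f)
    (p : Fin k → α) (a b : α) :
    f (Fin.snoc p (a + b)) = f (Fin.snoc p a) + f (Fin.snoc p b) := by
  have h1 : ∀ c : α, (Fin.snoc p c : Fin (k + 1) → α)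
      = Function.update (Fin.snoc p a) (Fin.last k) c := by
    intro c; rw [Fin.update_snoc_last]
  rw [h1 (a + b), hf.1 _ _ a b, ← h1 a, ← h1 b]

lemma ml_snoc_smul {k : ℕ} {f : (Fin (k + 1) → α) → h} (hf : MultiLinearOn K f)
    (p : Fin k → α) (c : K) (a : α) :
    f (Fin.snoc p (c • a)) = c • f (Fin.snoc p a) := by
  have h1 : ∀ b : α, (Fin.snoc p b : Fin (k + 1) → α)
      = Function.update (Fin.snoc p a) (Fin.last k) b := by
    intro b; rw [Fin.update_snoc_last]
  rw [h1 (c • a), hf.2 _ _ c a, ← h1 a]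

lemma ml_snoc_neg {k : ℕ} {f : (Fin (k + 1) → α) → h} (hf : MultiLinearOn K f)
    (p : Fin k → α) (a : α) :
    f (Fin.snoc p (-a)) = - f (Fin.snoc p a) := by
  have := ml_snoc_smul hf p (-1 : K) a
  simpa using this

end MLAux
section RBOMain

variable {K : Type*} [Field K] {g V : Type*} [AddCommGroup g] [Module K g]
  [AddCommGroup V] [Module K V] {m : ℕ}

/-- helper: `fst` of an updated tuple of pairs. -/
lemma fst_update {n : ℕ} (Z : Fin n → g × V) (i : Fin n) (c : g × V) :
    (fun k => (Function.update Z i c k).1) = Function.update (fun k => (Z k).1) i c.1 := by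
  funext k
  rcases eq_or_ne k i with rfl | hk
  · simp
  · simp [Function.update_of_ne hk]

lemma update_comp_succAbove {β : Type*} (Z : Fin (m + 2) → β) (k : Fin (m + 2))
    (q : Fin (m + 1)) (c : β) :
    (fun j => Function.update Z (k.succAbove q) c (k.succAbove j))
      = Function.update (fun j => Z (k.succAbove j)) q c := by
  funext j
  rcases eq_or_ne j q with rfl | hj
  · simp
  · rw [Function.update_of_ne hj,
      Function.update_of_ne (fun hc => hj (Fin.succAbove_right_injective hc))]

lemma update_comp_succAbove_self {β : Type*} (Z : Fin (m + 2) → β) (k : Fin (m + 2))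
    (c : β) :
    (fun j => Function.update Z k c (k.succAbove j)) = fun j => Z (k.succAbove j) := by
  funext j
  rw [Function.update_of_ne (Fin.succAbove_ne k j)]

/-- The semidirect product bracket on `g × V`. -/
def brL (br : (Fin (m + 2) → g) → g) (ρ : (Fin (m + 1) → g) → Module.End K V)
    (Z : Fin (m + 2) → g × V) : g × V :=
  (br (fun k => (Z k).1),
    ∑ k : Fin (m + 2), ((-1 : ℤ) ^ ((m + 1) - (k : ℕ))) •
      ρ (fun j => (Z (k.succAbove j)).1) ((Z k).2))

variable (br : (Fin (m + 2) → g) → g) (ρ : (Fin (m + 1) → g) → Module.End K V)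

lemma snoc_fst (X : Fin (m + 1) → g × V) (l : g × V) :
    (fun k => ((Fin.snoc X l : Fin (m + 2) → g × V) k).1)
      = Fin.snoc (fun i => (X i).1) l.1 := by
  funext k
  induction k using Fin.lastCases with
  | last => simp
  | cast k => simp

lemma snoc_comp_castSucc_succAbove (X : Fin (m + 1) → g × V) (l : g × V) (i : Fin (m + 1)) :
    (fun j => ((Fin.snoc X l : Fin (m + 2) → g × V) (i.castSucc.succAbove j)).1)
      = Fin.snoc (fun j => (X (i.succAbove j)).1) l.1 := by
  funext j
  induction j using Fin.lastCases with
  | last =>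
    have h1 : i.castSucc.succAbove (Fin.last m) = Fin.last (m + 1) := by
      rw [Fin.succAbove_of_le_castSucc _ _ (by
        simp [Fin.le_def]
        omega), Fin.succ_last]
    rw [h1]
    simp
  | cast j =>
    rw [Fin.castSucc_succAbove_castSucc]
    simp

lemma brL_snoc (X : Fin (m + 1) → g × V) (l : g × V) :
    brL br ρ (Fin.snoc X l) =
      (br (Fin.snoc (fun i => (X i).1) l.1),
        ρ (fun i => (X i).1) l.2 +
          ∑ i : Fin (m + 1), ((-1 : ℤ) ^ ((m + 1) - (i : ℕ))) •
            ρ (Fin.snoc (fun j => (X (i.succAbove j)).1) l.1) ((X i).2)) := by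
  unfold brL
  refine Prod.ext ?_ ?_
  · simp only
    rw [snoc_fst]
  · simp only
    rw [Fin.sum_univ_castSucc]
    rw [add_comm]
    congr 1
    · rw [Fin.snoc_last]
      have h2 : (fun j => ((Fin.snoc X l : Fin (m + 2) → g × V)
          ((Fin.last (m + 1)).succAbove j)).1) = fun i => (X i).1 := by
        funext j
        rw [Fin.succAbove_last]
        simp
      rw [h2]
      simp
    · refine Finset.sum_congr rfl fun i _ => ?_
      rw [snoc_comp_castSucc_succAbove]
      simp

variable (T : V →ₗ[K] g)

/-- Graph embedding of tuples. -/
def GT {k : ℕ} (u : Fin k → V) : Fin k → g × V := fun i => (T (u i), u i)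

/-- The projection `g × V → g` with kernel the graph of `T`. -/
def piT : (g × V) →ₗ[K] g := LinearMap.fst K g V - T.comp (LinearMap.snd K g V)

@[simp] lemma piT_apply (l : g × V) : piT T l = l.1 - T l.2 := rfl

lemma piT_GT {k : ℕ} (u : Fin k → V) (i : Fin k) : piT T (GT T u i) = 0 := by
  simp [GT]

/-- K1 : the RBO condition says the graph of `T` is closed under `brL`. -/
lemma brL_GT (hT : IsRBO K br ρ T) (v : Fin (m + 2) → V) :
    brL br ρ (GT T v) = (T (rbBracket K ρ T v), rbBracket K ρ T v) := by
  unfold brL GT rbBracket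
  refine Prod.ext ?_ ?_
  · simp only
    rw [hT v]
    rw [map_sum]
    refine Finset.sum_congr rfl fun i _ => ?_
    rw [map_zsmul]
  · simp

/-- K2 : `rbRho` via the semidirect bracket. -/
lemma piT_brL_snoc_GT (u : Fin (m + 1) → V) (x : g) :
    piT T (brL br ρ (Fin.snoc (GT T u) (x, 0))) = rbRho K br ρ T u x := by
  rw [brL_snoc]
  unfold rbRho
  simp only [piT_apply]
  have h0 : (ρ fun i => (GT T u i).1) (0 : V) = 0 := map_zero _
  rw [h0, zero_add, map_sum]
  congr 1
  refine Finset.sum_congr rfl fun i _ => ?_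
  rw [map_zsmul]
  rfl

/-- K3 : `rbRho` applied to `piT` of anything. -/
lemma piT_brL_snoc_GT' (hml : MultiLinearOn K (brL (K := K) br ρ))
    (hT : IsRBO K br ρ T) (u : Fin (m + 1) → V) (l : g × V) :
    piT T (brL br ρ (Fin.snoc (GT T u) l)) = rbRho K br ρ T u (piT T l) := by
  have hdecomp : l = ((l.1 - T l.2 : g), (0 : V)) + (T l.2, l.2) := by
    refine Prod.ext ?_ ?_ <;> simp
  have hgr : (Fin.snoc (GT T u) (T l.2, l.2) : Fin (m + 2) → g × V)
      = GT T (Fin.snoc u l.2) := by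
    funext k
    induction k using Fin.lastCases with
    | last => simp [GT]
    | cast k => simp [GT]
  calc piT T (brL br ρ (Fin.snoc (GT T u) l))
      = piT T (brL br ρ (Fin.snoc (GT T u) (((l.1 - T l.2 : g), (0 : V)) + (T l.2, l.2)))) := by
        rw [← hdecomp]
    _ = piT T (brL br ρ (Fin.snoc (GT T u) ((l.1 - T l.2 : g), (0 : V))))
          + piT T (brL br ρ (Fin.snoc (GT T u) (T l.2, l.2))) := by
        rw [ml_snoc_add (K := K) hml, map_add]
    _ = rbRho K br ρ T u (l.1 - T l.2) + 0 := by
        rw [piT_brL_snoc_GT, hgr, brL_GT br ρ T hT]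
        simp
    _ = rbRho K br ρ T u (piT T l) := by simp

end RBOMain
section RBOMain2

variable {K : Type*} [Field K] {g V : Type*} [AddCommGroup g] [Module K g]
  [AddCommGroup V] [Module K V] {m : ℕ}
variable (br : (Fin (m + 2) → g) → g) (ρ : (Fin (m + 1) → g) → Module.End K V)

lemma eps_castSucc_eq_neg (r : Fin (m + 1)) :
    ((-1 : ℤ) ^ ((m + 1) - (r.castSucc : ℕ)))
      = -((-1 : ℤ) ^ ((m + 1) - (r.succ : ℕ))) := by
  have hr : (r : ℕ) ≤ m := Nat.lt_succ_iff.mp r.isLt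
  simp only [Fin.coe_castSucc, Fin.val_succ]
  rw [show (m + 1) - (r : ℕ) = ((m + 1) - ((r : ℕ) + 1)) + 1 by omega, pow_succ]
  ring

lemma brL_multilinear (hbr : MultiLinearOn K br)
    (hρ : MultiLinearOn K ρ) :
    MultiLinearOn K (brL (K := K) br ρ) := by
  constructor
  · intro Z i a b
    refine Prod.ext ?_ ?_
    · simp only [brL, Prod.fst_add]
      rw [fst_update, fst_update, fst_update, Prod.fst_add]
      exact hbr.1 (fun k => (Z k).1) i a.1 b.1
    · simp only [brL, Prod.snd_add]
      rw [← Finset.sum_add_distrib]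
      refine Finset.sum_congr rfl fun k _ => ?_
      rcases eq_or_ne k i with rfl | hk
      · have h1 : ∀ c : g × V,
            (fun j => ((Function.update Z k c) (k.succAbove j)).1)
              = fun j => (Z (k.succAbove j)).1 := by
          intro c; funext j; rw [Function.update_of_ne (Fin.succAbove_ne k j)]
        rw [h1, h1, h1]
        simp only [Function.update_self, Prod.snd_add]
        rw [map_add, smul_add]
      · obtain ⟨q, hq⟩ := Fin.exists_succAbove_eq (Ne.symm hk)
        rw [← hq]
        have h2 : ∀ c : g × V,
            (fun j => ((Function.update Z (k.succAbove q) c) (k.succAbove j)).1)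
              = Function.update (fun j => (Z (k.succAbove j)).1) q c.1 := by
          intro c; funext j
          rcases eq_or_ne j q with rfl | hj
          · simp
          · rw [Function.update_of_ne hj,
              Function.update_of_ne (fun hc => hj (Fin.succAbove_right_injective hc))]
        have h3 : ∀ c : g × V,
            ((Function.update Z (k.succAbove q) c) k).2 = (Z k).2 := by
          intro c; rw [Function.update_of_ne (Fin.succAbove_ne k q).symm]
        rw [h2, h2, h2, h3, h3, h3, Prod.fst_add,
          hρ.1 (fun j => (Z (k.succAbove j)).1) q a.1 b.1]
        rw [LinearMap.add_apply, smul_add]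
  · intro Z i c a
    refine Prod.ext ?_ ?_
    · simp only [brL, Prod.smul_fst]
      rw [fst_update, fst_update, Prod.smul_fst]
      exact hbr.2 (fun k => (Z k).1) i c a.1
    · simp only [brL, Prod.smul_snd]
      rw [Finset.smul_sum]
      refine Finset.sum_congr rfl fun k _ => ?_
      rcases eq_or_ne k i with rfl | hk
      · have h1 : ∀ e : g × V,
            (fun j => ((Function.update Z k e) (k.succAbove j)).1)
              = fun j => (Z (k.succAbove j)).1 := by
          intro e; funext j; rw [Function.update_of_ne (Fin.succAbove_ne k j)]
        rw [h1, h1]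
        simp only [Function.update_self, Prod.smul_snd]
        rw [map_smul, smul_comm]
      · obtain ⟨q, hq⟩ := Fin.exists_succAbove_eq (Ne.symm hk)
        rw [← hq]
        have h2 : ∀ e : g × V,
            (fun j => ((Function.update Z (k.succAbove q) e) (k.succAbove j)).1)
              = Function.update (fun j => (Z (k.succAbove j)).1) q e.1 := by
          intro e; funext j
          rcases eq_or_ne j q with rfl | hj
          · simp
          · rw [Function.update_of_ne hj,
              Function.update_of_ne (fun hc => hj (Fin.succAbove_right_injective hc))]
        have h3 : ∀ e : g × V,
            ((Function.update Z (k.succAbove q) e) k).2 = (Z k).2 := by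
          intro e; rw [Function.update_of_ne (Fin.succAbove_ne k q).symm]
        rw [h2, h2, h3, h3, Prod.smul_fst,
          hρ.2 (fun j => (Z (k.succAbove j)).1) q c a.1]
        rw [LinearMap.smul_apply, smul_comm]

lemma brL_skew (hbr : SkewOn br) (hρ : SkewOn ρ) :
    SkewOn (brL (K := K) br ρ) := by
  apply skewOn_of_adjacent (k := m + 1)
  intro Z r
  set s := Equiv.swap (r.castSucc : Fin (m + 2)) r.succ with hs
  have hne : (r.castSucc : Fin (m + 2)) ≠ r.succ := (Fin.castSucc_lt_succ (i := r)).ne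
  have C2 : ∀ j : Fin (m + 1), s (r.castSucc.succAbove j) = r.succ.succAbove j := by
    intro j
    rcases lt_trichotomy (j : ℕ) (r : ℕ) with hlt | heq | hgt
    · rw [Fin.succAbove_castSucc_of_lt r j (by rw [Fin.lt_def]; exact hlt),
        Fin.succAbove_of_castSucc_lt r.succ j (by rw [Fin.lt_def, Fin.coe_castSucc, Fin.val_succ]; omega)]
      refine Equiv.swap_apply_of_ne_of_ne ?_ ?_
      · intro hc
        have h := congrArg Fin.val hc
        rw [Fin.coe_castSucc, Fin.coe_castSucc] at h
        omega
      · intro hc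
        have h := congrArg Fin.val hc
        rw [Fin.coe_castSucc, Fin.val_succ] at h
        omega
    · have hj : j = r := Fin.ext heq
      subst hj
      rw [Fin.succAbove_castSucc_self, Fin.succAbove_of_castSucc_lt _ _ (Fin.castSucc_lt_succ (i := j))]
      exact Equiv.swap_apply_right _ _
    · rw [Fin.succAbove_castSucc_of_le r j (by rw [Fin.le_def]; omega),
        Fin.succAbove_of_le_castSucc r.succ j (by rw [Fin.le_def, Fin.coe_castSucc, Fin.val_succ]; omega)]
      refine Equiv.swap_apply_of_ne_of_ne ?_ ?_
      · intro hc
        have h := congrArg Fin.val hc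
        rw [Fin.val_succ, Fin.coe_castSucc] at h
        omega
      · intro hc
        have h := congrArg Fin.val hc
        rw [Fin.val_succ, Fin.val_succ] at h
        omega
  have C1 : ∀ j : Fin (m + 1), s (r.succ.succAbove j) = r.castSucc.succAbove j := by
    intro j
    rw [← C2 j]
    exact Equiv.swap_apply_self _ _ _
  refine Prod.ext ?_ ?_
  · simp only [brL, Prod.fst_neg]
    have hc : (fun k => ((Z ∘ s) k).1) = (fun k => (Z k).1) ∘ s := rfl
    rw [hc, hbr _ s, hs, Equiv.Perm.sign_swap hne]
    simp
  · simp only [brL, Prod.snd_neg]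
    rw [← Equiv.sum_comp s (fun k => ((-1 : ℤ) ^ ((m + 1) - (k : ℕ))) •
      ρ (fun j => ((Z ∘ s) (k.succAbove j)).1) (((Z ∘ s) k).2)), ← Finset.sum_neg_distrib]
    refine Finset.sum_congr rfl fun k _ => ?_
    simp only [Function.comp_apply]
    have hss : s (s k) = k := Equiv.swap_apply_self _ _ _
    rcases eq_or_ne k r.castSucc with rfl | hk1
    · have h1 : s r.castSucc = r.succ := Equiv.swap_apply_left _ _
      rw [hss, h1]
      have h2 : (fun j => (Z (s (r.succ.succAbove j))).1)
          = fun j => (Z (r.castSucc.succAbove j)).1 := by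
        funext j; rw [C1 j]
      rw [h2, eps_castSucc_eq_neg, neg_smul, neg_neg]
    rcases eq_or_ne k r.succ with rfl | hk2
    · have h1 : s r.succ = r.castSucc := Equiv.swap_apply_right _ _
      rw [hss, h1]
      have h2 : (fun j => (Z (s (r.castSucc.succAbove j))).1)
          = fun j => (Z (r.succ.succAbove j)).1 := by
        funext j; rw [C2 j]
      rw [h2, eps_castSucc_eq_neg, neg_smul]
    · have h1 : s k = k := Equiv.swap_apply_of_ne_of_ne hk1 hk2
      rw [hss, h1]
      obtain ⟨q1, hq1⟩ := Fin.exists_succAbove_eq (Ne.symm hk1)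
      obtain ⟨q2, hq2⟩ := Fin.exists_succAbove_eq (Ne.symm hk2)
      have hq12 : q1 ≠ q2 := by
        intro hc; apply hne; rw [← hq1, ← hq2, hc]
      have h2 : (fun j => (Z (s (k.succAbove j))).1)
          = (fun j => (Z (k.succAbove j)).1) ∘ (Equiv.swap q1 q2) := by
        funext j
        simp only [Function.comp_apply]
        rcases eq_or_ne j q1 with rfl | hj1
        · rw [hq1, Equiv.swap_apply_left, Equiv.swap_apply_left, hq2]
        rcases eq_or_ne j q2 with rfl | hj2
        · rw [hq2, Equiv.swap_apply_right, Equiv.swap_apply_right, hq1]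
        · rw [Equiv.swap_apply_of_ne_of_ne
            (fun hc => hj1 (by rw [← hq1] at hc; exact Fin.succAbove_right_injective hc))
            (fun hc => hj2 (by rw [← hq2] at hc; exact Fin.succAbove_right_injective hc)),
            Equiv.swap_apply_of_ne_of_ne hj1 hj2]
      rw [h2, hρ (fun j => (Z (k.succAbove j)).1) (Equiv.swap q1 q2),
        Equiv.Perm.sign_swap hq12]
      simp

end RBOMain2
section RBOMain3

variable {K : Type*} [Field K] {g V : Type*} [AddCommGroup g] [Module K g]
  [AddCommGroup V] [Module K V] {m : ℕ}

/-- Derived `n`-Lie identity: the second representation axiom for the adjoint action. -/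
lemma adj2 {α : Type*} [AddCommGroup α] [Module K α] {br : (Fin (m + 2) → α) → α}
    (hml : MultiLinearOn K br) (hsk : SkewOn br) (hfi : Filippov br)
    (x : Fin m → α) (y : Fin (m + 2) → α) (w : α) :
    br (Fin.snoc (Fin.snoc x (br y)) w) =
      ∑ i : Fin (m + 2), ((-1 : ℤ) ^ ((m + 1) - (i : ℕ))) •
        br (Fin.snoc (fun j => y (i.succAbove j))
          (br (Fin.snoc (Fin.snoc x (y i)) w))) := by
  rw [skew_snoc_swap hsk x (br y) w, hfi (Fin.snoc x w) y, ← Finset.sum_neg_distrib]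
  refine Finset.sum_congr rfl fun i _ => ?_
  rw [skew_update hsk y i (br (Fin.snoc (Fin.snoc x w) (y i))),
    skew_snoc_swap hsk x w (y i), ml_snoc_neg hml, smul_neg, neg_neg]

variable (br : (Fin (m + 2) → g) → g) (ρ : (Fin (m + 1) → g) → Module.End K V)

lemma brL_fst (Z : Fin (m + 2) → g × V) :
    (brL (K := K) br ρ Z).1 = br (fun k => (Z k).1) := rfl

lemma brL_snd (Z : Fin (m + 2) → g × V) :
    (brL (K := K) br ρ Z).2 =
      ∑ k : Fin (m + 2), ((-1 : ℤ) ^ ((m + 1) - (k : ℕ))) •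
        ρ (fun j => (Z (k.succAbove j)).1) ((Z k).2) := rfl

lemma update_pair_comp (Y : Fin (m + 2) → g × V) (k : Fin (m + 2)) (q : Fin (m + 1))
    (c : g × V) :
    (fun j => ((Function.update Y (k.succAbove q) c) (k.succAbove j)).1)
      = Function.update (fun j => (Y (k.succAbove j)).1) q c.1 := by
  funext j
  rcases eq_or_ne j q with rfl | hj
  · simp
  · rw [Function.update_of_ne hj,
      Function.update_of_ne (fun hc => hj (Fin.succAbove_right_injective hc))]

lemma brL_filippov (hbr : IsNLie K br) (hρ : IsRep K br ρ) :
    Filippov (brL (K := K) br ρ) := by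
  intro X Y
  have hW1 : ∀ p : Fin (m + 2), (brL (K := K) br ρ (Fin.snoc X (Y p))).1
      = br (Fin.snoc (fun i => (X i).1) ((Y p).1)) := by
    intro p; rw [brL_snoc]
  have hW2 : ∀ p : Fin (m + 2), (brL (K := K) br ρ (Fin.snoc X (Y p))).2
      = ρ (fun i => (X i).1) ((Y p).2) +
        ∑ i : Fin (m + 1), ((-1 : ℤ) ^ ((m + 1) - (i : ℕ))) •
          ρ (Fin.snoc (fun j => (X (i.succAbove j)).1) ((Y p).1)) ((X i).2) := by
    intro p; rw [brL_snoc]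
  refine Prod.ext ?_ ?_
  · -- first components: the Filippov identity for `br`
    rw [brL_snoc, Prod.fst_sum]
    have h1 : ∀ p : Fin (m + 2),
        (brL (K := K) br ρ (Function.update Y p (brL br ρ (Fin.snoc X (Y p))))).1
          = br (Function.update (fun k => (Y k).1) p
              (br (Fin.snoc (fun i => (X i).1) ((Y p).1)))) := by
      intro p
      rw [brL_fst, fst_update, hW1]
    rw [Finset.sum_congr rfl (fun p _ => h1 p), brL_fst]
    exact hbr.2.2 (fun i => (X i).1) (fun k => (Y k).1)
  · -- second components
    rw [brL_snoc, Prod.snd_sum]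
    dsimp only
    -- normalize the left side
    have hL : ρ (fun i => (X i).1) ((brL (K := K) br ρ Y).2) +
        ∑ i : Fin (m + 1), ((-1 : ℤ) ^ ((m + 1) - (i : ℕ))) •
          ρ (Fin.snoc (fun j => (X (i.succAbove j)).1) ((brL (K := K) br ρ Y).1)) ((X i).2)
        = (∑ k : Fin (m + 2), ((-1 : ℤ) ^ ((m + 1) - (k : ℕ))) •
            ρ (fun i => (X i).1) (ρ (fun j => (Y (k.succAbove j)).1) ((Y k).2)))
          + ∑ i : Fin (m + 1), ((-1 : ℤ) ^ ((m + 1) - (i : ℕ))) •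
              ∑ k : Fin (m + 2), ((-1 : ℤ) ^ ((m + 1) - (k : ℕ))) •
                ρ (fun j => (Y (k.succAbove j)).1)
                  (ρ (Fin.snoc (fun j => (X (i.succAbove j)).1) ((Y k).1)) ((X i).2)) := by
      congr 1
      · rw [brL_snd, map_sum]
        refine Finset.sum_congr rfl fun k _ => ?_
        rw [map_zsmul]
      · refine Finset.sum_congr rfl fun i _ => ?_
        rw [brL_fst, hρ.2.2.2 (fun j => (X (i.succAbove j)).1) (fun k => (Y k).1),
          LinearMap.sum_apply]
        congr 1
    rw [hL]
    -- normalize the right side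
    have hRHS : ∑ p : Fin (m + 2),
        (brL (K := K) br ρ (Function.update Y p (brL br ρ (Fin.snoc X (Y p))))).2
        = ∑ k : Fin (m + 2), (((-1 : ℤ) ^ ((m + 1) - (k : ℕ))) •
            ρ (fun i => (X i).1) (ρ (fun j => (Y (k.succAbove j)).1) ((Y k).2))
          + ((-1 : ℤ) ^ ((m + 1) - (k : ℕ))) •
            ∑ i : Fin (m + 1), ((-1 : ℤ) ^ ((m + 1) - (i : ℕ))) •
              ρ (fun j => (Y (k.succAbove j)).1)
                (ρ (Fin.snoc (fun j => (X (i.succAbove j)).1) ((Y k).1)) ((X i).2))) := by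
      rw [Finset.sum_congr rfl (fun p _ => brL_snd br ρ
        (Function.update Y p (brL br ρ (Fin.snoc X (Y p)))))]
      rw [Finset.sum_comm]
      refine Finset.sum_congr rfl fun k _ => ?_
      rw [Fin.sum_univ_succAbove (fun p => ((-1 : ℤ) ^ ((m + 1) - (k : ℕ))) •
        ρ (fun j => ((Function.update Y p (brL (K := K) br ρ (Fin.snoc X (Y p))))
            (k.succAbove j)).1)
          (((Function.update Y p (brL (K := K) br ρ (Fin.snoc X (Y p)))) k).2)) k]
      -- diagonal term
      have hdiag : ((-1 : ℤ) ^ ((m + 1) - (k : ℕ))) •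
          ρ (fun j => ((Function.update Y k (brL (K := K) br ρ (Fin.snoc X (Y k))))
              (k.succAbove j)).1)
            (((Function.update Y k (brL (K := K) br ρ (Fin.snoc X (Y k)))) k).2)
          = ((-1 : ℤ) ^ ((m + 1) - (k : ℕ))) •
              ρ (fun j => (Y (k.succAbove j)).1) (ρ (fun i => (X i).1) ((Y k).2))
            + ((-1 : ℤ) ^ ((m + 1) - (k : ℕ))) •
              ∑ i : Fin (m + 1), ((-1 : ℤ) ^ ((m + 1) - (i : ℕ))) •
                ρ (fun j => (Y (k.succAbove j)).1)
                  (ρ (Fin.snoc (fun j => (X (i.succAbove j)).1) ((Y k).1)) ((X i).2)) := by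
        have hargs : (fun j => ((Function.update Y k (brL (K := K) br ρ (Fin.snoc X (Y k))))
            (k.succAbove j)).1) = fun j => (Y (k.succAbove j)).1 := by
          funext j; rw [Function.update_of_ne (Fin.succAbove_ne k j)]
        rw [hargs, Function.update_self, hW2 k, map_add, smul_add]
        congr 1
        rw [map_sum]
        congr 1
        refine Finset.sum_congr rfl fun i _ => ?_
        rw [map_zsmul]
      -- off-diagonal terms
      have hoff : ∑ q : Fin (m + 1), ((-1 : ℤ) ^ ((m + 1) - (k : ℕ))) •
          ρ (fun j => ((Function.update Y (k.succAbove q)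
              (brL (K := K) br ρ (Fin.snoc X (Y (k.succAbove q))))) (k.succAbove j)).1)
            (((Function.update Y (k.succAbove q)
              (brL (K := K) br ρ (Fin.snoc X (Y (k.succAbove q))))) k).2)
          = ((-1 : ℤ) ^ ((m + 1) - (k : ℕ))) •
              ρ (fun i => (X i).1) (ρ (fun j => (Y (k.succAbove j)).1) ((Y k).2))
            - ((-1 : ℤ) ^ ((m + 1) - (k : ℕ))) •
              ρ (fun j => (Y (k.succAbove j)).1) (ρ (fun i => (X i).1) ((Y k).2)) := by
        have hterm : ∀ q : Fin (m + 1),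
            (((-1 : ℤ) ^ ((m + 1) - (k : ℕ))) •
            ρ (fun j => ((Function.update Y (k.succAbove q)
                (brL (K := K) br ρ (Fin.snoc X (Y (k.succAbove q))))) (k.succAbove j)).1)
              (((Function.update Y (k.succAbove q)
                (brL (K := K) br ρ (Fin.snoc X (Y (k.succAbove q))))) k).2))
            = ((-1 : ℤ) ^ ((m + 1) - (k : ℕ))) •
              ρ (Function.update (fun j => (Y (k.succAbove j)).1) q
                  (br (Fin.snoc (fun i => (X i).1) ((Y (k.succAbove q)).1)))) ((Y k).2) := by
          intro q
          rw [update_pair_comp, hW1,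
            Function.update_of_ne (Fin.succAbove_ne k q).symm]
        rw [Finset.sum_congr rfl (fun q _ => hterm q), ← Finset.smul_sum,
          ← LinearMap.sum_apply]
        rw [← hρ.2.2.1 (fun i => (X i).1) (fun j => (Y (k.succAbove j)).1)]
        rw [LinearMap.sub_apply, Module.End.mul_apply, Module.End.mul_apply, smul_sub]
      rw [hdiag, hoff]
      abel
    rw [hRHS, Finset.sum_add_distrib]
    congr 1
    have hswap : ∀ (M : Fin (m + 1) → Fin (m + 2) → V),
        (∑ i : Fin (m + 1), ((-1 : ℤ) ^ ((m + 1) - (i : ℕ))) •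
          ∑ k : Fin (m + 2), ((-1 : ℤ) ^ ((m + 1) - (k : ℕ))) • M i k)
        = ∑ k : Fin (m + 2), ((-1 : ℤ) ^ ((m + 1) - (k : ℕ))) •
            ∑ i : Fin (m + 1), ((-1 : ℤ) ^ ((m + 1) - (i : ℕ))) • M i k := by
      intro M
      simp_rw [Finset.smul_sum]
      rw [Finset.sum_comm]
      refine Finset.sum_congr rfl fun k _ => Finset.sum_congr rfl fun i _ => ?_
      rw [smul_comm]
    exact hswap _

end RBOMain3
end Aux

/-- Let `T` be a relative Rota-Baxter operator on an `n`-LieRep pair `(g, ρ)`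
(`n = m+2`).  Define `ρ_T(u₁,...,u_{n-1})x = [Tu₁,...,Tu_{n-1},x]_g
- Σᵢ (-1)^{n-i} T(ρ(Tu₁,...,T̂uᵢ,...,Tu_{n-1},x)(uᵢ))`.  Then `(g; ρ_T)` is a representation
of the `n`-Lie algebra `(V, [-,...,-]_T)` (representation axioms stated pointwise, together
with multilinearity and skew-symmetry of `ρ_T`). -/
theorem rbo_rho_T_is_rep {K : Type*} [Field K] {g V : Type*}
    [AddCommGroup g] [Module K g] [AddCommGroup V] [Module K V] {m : ℕ}
    (br : (Fin (m + 2) → g) → g) (ρ : (Fin (m + 1) → g) → Module.End K V)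
    (T : V →ₗ[K] g) (hg : IsNLie K br) (hρ : IsRep K br ρ) (hT : IsRBO K br ρ T) :
    (∀ x : g, MultiLinearOn K (fun u : Fin (m + 1) → V => rbRho K br ρ T u x)) ∧
    (∀ x : g, SkewOn (fun u : Fin (m + 1) → V => rbRho K br ρ T u x)) ∧
    (∀ (X Y : Fin (m + 1) → V) (x : g),
        rbRho K br ρ T X (rbRho K br ρ T Y x) - rbRho K br ρ T Y (rbRho K br ρ T X x) =
          ∑ i : Fin (m + 1),
            rbRho K br ρ T (Function.update Y i (rbBracket K ρ T (Fin.snoc X (Y i)))) x) ∧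
    (∀ (u : Fin m → V) (v : Fin (m + 2) → V) (x : g),
        rbRho K br ρ T (Fin.snoc u (rbBracket K ρ T v)) x =
          ∑ i : Fin (m + 2), ((-1 : ℤ) ^ ((m + 1) - (i : ℕ))) •
            rbRho K br ρ T (fun j => v (i.succAbove j))
              (rbRho K br ρ T (Fin.snoc u (v i)) x)) := by

  have hml : MultiLinearOn K (brL (K := K) br ρ) := brL_multilinear br ρ hg.1 hρ.1
  have hsk : SkewOn (brL (K := K) br ρ) := brL_skew br ρ hg.2.1 hρ.2.1
  have hfi : Filippov (brL (K := K) br ρ) := brL_filippov br ρ hg hρ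
  refine ⟨?_, ?_, ?_, ?_⟩
  · -- multilinearity of rbRho in u
    intro x
    have key : ∀ (u : Fin (m + 1) → V) (i : Fin (m + 1)) (c : V),
        rbRho K br ρ T (Function.update u i c) x
          = piT T (brL br ρ (Function.update
              (Fin.snoc (GT T u) ((x : g), (0 : V))) i.castSucc ((T c, c) : g × V))) := by
      intro u i c
      rw [← piT_brL_snoc_GT br ρ T]
      have h2 : GT T (Function.update u i c) = Function.update (GT T u) i ((T c, c) : g × V) := by
        funext j
        rcases eq_or_ne j i with rfl | hj
        · simp [GT]
        · simp [GT, Function.update_of_ne hj]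
      rw [h2, Fin.snoc_update]
    constructor
    · intro u i a b
      show rbRho K br ρ T (Function.update u i (a + b)) x
        = rbRho K br ρ T (Function.update u i a) x + rbRho K br ρ T (Function.update u i b) x
      rw [key u i (a + b), key u i a, key u i b]
      have hadd : ((T (a + b), a + b) : g × V) = ((T a, a) : g × V) + ((T b, b) : g × V) := by
        refine Prod.ext ?_ ?_ <;> simp
      rw [hadd, hml.1, map_add]
    · intro u i c a
      show rbRho K br ρ T (Function.update u i (c • a)) x
        = c • rbRho K br ρ T (Function.update u i a) x
      rw [key u i (c • a), key u i a]
      have hsmul : ((T (c • a), c • a) : g × V) = c • ((T a, a) : g × V) := by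
        refine Prod.ext ?_ ?_ <;> simp
      rw [hsmul, hml.2, map_smul]
  · -- skew-symmetry of rbRho in u
    intro x u σ
    show rbRho K br ρ T (u ∘ σ) x
      = ((Equiv.Perm.sign σ : ℤˣ) : ℤ) • rbRho K br ρ T u x
    set e : Fin (m + 1) ≃ {i : Fin (m + 2) // (i : ℕ) < m + 1} :=
      { toFun := fun i => ⟨i.castSucc, by have := i.isLt; simp; omega⟩
        invFun := fun i => ⟨(i.1 : ℕ), i.2⟩
        left_inv := fun i => by ext; simp
        right_inv := fun i => by ext; simp } with he
    set σ' := σ.extendDomain e with hσ'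
    have hcomp : (Fin.snoc (GT T u) ((x : g), (0 : V)) : Fin (m + 2) → g × V) ∘ σ'
        = Fin.snoc ((GT T u) ∘ σ) ((x : g), (0 : V)) := by
      funext t
      induction t using Fin.lastCases with
      | last =>
        have hfix : σ' (Fin.last (m + 1)) = Fin.last (m + 1) :=
          Equiv.Perm.extendDomain_apply_not_subtype σ e (by simp)
        simp only [Function.comp_apply, hfix]
        simp
      | cast i =>
        have hmove : σ' i.castSucc = (σ i).castSucc := by
          have h1 : ((i.castSucc : Fin (m + 2)) : ℕ) < m + 1 := by have := i.isLt; simp; omega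
          rw [hσ', Equiv.Perm.extendDomain_apply_subtype σ e h1]
          have h2 : e.symm ⟨i.castSucc, h1⟩ = i := by
            rw [he]; ext; simp
          rw [h2, he]
          rfl
        simp only [Function.comp_apply, hmove]
        simp
    have hGTc : GT T (u ∘ σ) = (GT T u) ∘ σ := rfl
    calc rbRho K br ρ T (u ∘ σ) x
        = piT T (brL br ρ (Fin.snoc (GT T (u ∘ σ)) ((x : g), (0 : V)))) :=
          (piT_brL_snoc_GT br ρ T _ x).symm
      _ = piT T (brL br ρ ((Fin.snoc (GT T u) ((x : g), (0 : V))) ∘ σ')) := by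
          rw [hGTc, ← hcomp]
      _ = piT T (((Equiv.Perm.sign σ' : ℤˣ) : ℤ) • brL br ρ (Fin.snoc (GT T u) ((x : g), (0 : V)))) := by
          rw [hsk _ σ']
      _ = ((Equiv.Perm.sign σ : ℤˣ) : ℤ) • rbRho K br ρ T u x := by
          rw [map_zsmul, piT_brL_snoc_GT, hσ', Equiv.Perm.sign_extendDomain]
  · -- the commutator identity
    intro X Y x
    have h1 : rbRho K br ρ T X (rbRho K br ρ T Y x)
        = piT T (brL br ρ (Fin.snoc (GT T X)
            (brL br ρ (Fin.snoc (GT T Y) ((x : g), (0 : V)))))) := by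
      rw [piT_brL_snoc_GT' br ρ T hml hT, piT_brL_snoc_GT]
    have h2 : rbRho K br ρ T Y (rbRho K br ρ T X x)
        = piT T (brL br ρ (Fin.snoc (GT T Y)
            (brL br ρ (Fin.snoc (GT T X) ((x : g), (0 : V)))))) := by
      rw [piT_brL_snoc_GT' br ρ T hml hT, piT_brL_snoc_GT]
    rw [h1, h2, hfi (GT T X) (Fin.snoc (GT T Y) ((x : g), (0 : V))), map_sum,
      Fin.sum_univ_castSucc]
    have hlast : Function.update (Fin.snoc (GT T Y) ((x : g), (0 : V))) (Fin.last (m + 1))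
        (brL br ρ (Fin.snoc (GT T X)
          ((Fin.snoc (GT T Y) ((x : g), (0 : V)) : Fin (m + 2) → g × V) (Fin.last (m + 1)))))
        = (Fin.snoc (GT T Y) (brL br ρ (Fin.snoc (GT T X) ((x : g), (0 : V))))
            : Fin (m + 2) → g × V) := by
      rw [Fin.snoc_last, Fin.update_snoc_last]
    rw [hlast]
    have hterm : ∀ i : Fin (m + 1),
        piT T (brL br ρ (Function.update (Fin.snoc (GT T Y) ((x : g), (0 : V))) i.castSucc
          (brL br ρ (Fin.snoc (GT T X)
            ((Fin.snoc (GT T Y) ((x : g), (0 : V)) : Fin (m + 2) → g × V) i.castSucc)))))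
        = rbRho K br ρ T (Function.update Y i (rbBracket K ρ T (Fin.snoc X (Y i)))) x := by
      intro i
      have e1 : (Fin.snoc (GT T Y) ((x : g), (0 : V)) : Fin (m + 2) → g × V) i.castSucc
          = GT T Y i := Fin.snoc_castSucc _ _ _
      rw [e1]
      have e2 : (Fin.snoc (GT T X) (GT T Y i) : Fin (m + 2) → g × V)
          = GT T (Fin.snoc X (Y i)) := by
        funext k
        induction k using Fin.lastCases with
        | last => simp [GT]
        | cast k => simp [GT]
      rw [e2, brL_GT br ρ T hT]
      have e3 : Function.update (Fin.snoc (GT T Y) ((x : g), (0 : V))) i.castSucc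
          ((T (rbBracket K ρ T (Fin.snoc X (Y i))), rbBracket K ρ T (Fin.snoc X (Y i))) : g × V)
          = (Fin.snoc (GT T (Function.update Y i (rbBracket K ρ T (Fin.snoc X (Y i)))))
              ((x : g), (0 : V)) : Fin (m + 2) → g × V) := by
        have e4 : Function.update (GT T Y) i
            ((T (rbBracket K ρ T (Fin.snoc X (Y i))), rbBracket K ρ T (Fin.snoc X (Y i))) : g × V)
            = GT T (Function.update Y i (rbBracket K ρ T (Fin.snoc X (Y i)))) := by
          funext j
          rcases eq_or_ne j i with rfl | hj
          · simp [GT]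
          · simp [GT, Function.update_of_ne hj]
        rw [← Fin.snoc_update, e4]
      rw [e3, piT_brL_snoc_GT]
    rw [Finset.sum_congr rfl (fun i _ => hterm i)]
    abel
  · -- the second representation axiom
    intro u v x
    have e1 : GT T (Fin.snoc u (rbBracket K ρ T v))
        = Fin.snoc (GT T u) (brL br ρ (GT T v)) := by
      rw [brL_GT br ρ T hT]
      funext k
      induction k using Fin.lastCases with
      | last => simp [GT]
      | cast k => simp [GT]
    rw [← piT_brL_snoc_GT br ρ T (Fin.snoc u (rbBracket K ρ T v)) x, e1,
      adj2 hml hsk hfi (GT T u) (GT T v) ((x : g), (0 : V)), map_sum]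
    refine Finset.sum_congr rfl fun i _ => ?_
    rw [map_zsmul]
    congr 1
    have e2' : (Fin.snoc (GT T u) (GT T v i) : Fin (m + 1) → g × V)
        = GT T (Fin.snoc u (v i)) := by
      funext k
      induction k using Fin.lastCases with
      | last => simp [GT]
      | cast k => simp [GT]
    have e2 : (Fin.snoc (Fin.snoc (GT T u) (GT T v i)) ((x : g), (0 : V)) : Fin (m + 2) → g × V)
        = Fin.snoc (GT T (Fin.snoc u (v i))) ((x : g), (0 : V)) := by
      rw [e2']
    have e3 : (fun j => GT T v (i.succAbove j)) = GT T (fun j => v (i.succAbove j)) := rfl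
    rw [e2, e3, piT_brL_snoc_GT' br ρ T hml hT, piT_brL_snoc_GT]
end

section
/- Let (g,[-,...,-]_g) be an n-Lie algebra and f ∈ g* a linear functional with f([x1,...,xn]_g) = 0 for all xi. Then the bracket {x1,...,x_{n+1}} := Σ_{i=1}^{n+1} (−1)^{i−1} f(xi)[x1,...,x̂i,...,x_{n+1}]_g defines an (n+1)-Lie algebra structure on g. -/
/-- The `(n+1)`-Lie bracket on `g` built from an `n`-Lie bracket (`n = m+2`) and a linear
functional `f` vanishing on brackets:
`{x₁,...,x_{n+1}} = Σᵢ (-1)^{i-1} f(xᵢ) [x₁,...,x̂ᵢ,...,x_{n+1}]_g`. -/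
def fBr (K : Type*) [Field K] {g : Type*} [AddCommGroup g] [Module K g] {m : ℕ}
    (br : (Fin (m + 2) → g) → g) (f : g →ₗ[K] K) (x : Fin (m + 1 + 2) → g) : g :=
  ∑ i : Fin (m + 1 + 2), ((-1 : ℤ) ^ (i : ℕ)) •
    (f (x i) • br (fun j => x (i.succAbove j)))

/-- The induced map `ϱ(x₁,...,xₙ) = Σᵢ (-1)^{i-1} f(xᵢ) ρ(x₁,...,x̂ᵢ,...,xₙ)`. -/
def fRho (K : Type*) [Field K] {g V : Type*} [AddCommGroup g] [Module K g]
    [AddCommGroup V] [Module K V] {m : ℕ}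
    (ρ : (Fin (m + 1) → g) → Module.End K V) (f : g →ₗ[K] K)
    (x : Fin (m + 1 + 1) → g) : Module.End K V :=
  ∑ i : Fin (m + 1 + 1), ((-1 : ℤ) ^ (i : ℕ)) •
    (f (x i) • ρ (fun j => x (i.succAbove j)))

section FConstructionHelpers

open Finset

variable {K : Type*} [Field K] {g : Type*} [AddCommGroup g] [Module K g]

private lemma mlo_update_zero {k : ℕ} {B : (Fin k → g) → g} (hB : MultiLinearOn K B)
    (x : Fin k → g) (i : Fin k) : B (Function.update x i (0 : g)) = 0 := by
  simpa using hB.2 x i 0 0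

private lemma mlo_update_sum {k : ℕ} {B : (Fin k → g) → g} (hB : MultiLinearOn K B)
    (x : Fin k → g) (i : Fin k) {ι : Type*} (s : Finset ι) (t : ι → g) :
    B (Function.update x i (∑ b ∈ s, t b)) = ∑ b ∈ s, B (Function.update x i (t b)) := by
  classical
  induction s using Finset.induction_on with
  | empty => simpa using mlo_update_zero hB x i
  | insert _ _ hnot ih => rw [Finset.sum_insert hnot, hB.1, ih, Finset.sum_insert hnot]

variable {m : ℕ} {br : (Fin (m + 2) → g) → g} {f : g →ₗ[K] K}

private lemma fBr_apply (br : (Fin (m + 2) → g) → g) (f : g →ₗ[K] K)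
    (x : Fin (m + 1 + 2) → g) :
    fBr K br f x = ∑ i : Fin (m + 1 + 2), ((-1 : K) ^ (i : ℕ) * f (x i)) •
      br (fun j => x (i.succAbove j)) := by
  rw [fBr]
  refine Finset.sum_congr rfl fun i _ => ?_
  rw [← Int.cast_smul_eq_zsmul K, mul_smul, Int.cast_pow, Int.cast_neg, Int.cast_one]

private lemma f_fBr (hf : ∀ y : Fin (m + 2) → g, f (br y) = 0) (x : Fin (m + 1 + 2) → g) :
    f (fBr K br f x) = 0 := by
  rw [fBr_apply, map_sum]
  refine Finset.sum_eq_zero fun i _ => ?_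
  rw [map_smul, hf, smul_zero]

private lemma skew_cancel (hsk : SkewOn br) (u : Fin (m + 2) → g) (c : Fin (m + 2)) :
    br u = ((-1 : K) ^ (c : ℕ)) • br (fun l => u (c.cycleRange.symm l)) := by
  have h : br (u ∘ ⇑(c.cycleRange)⁻¹) = ((-1 : ℤ) ^ (c : ℕ)) • br u := by
    rw [hsk u (c.cycleRange)⁻¹]
    congr 1
    rw [map_inv, Fin.sign_cycleRange]
    simp
  have h2 : ((-1 : ℤ) ^ (c : ℕ)) • br (u ∘ ⇑(c.cycleRange)⁻¹) = br u := by
    rw [h, smul_smul, ← mul_pow]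
    norm_num
  rw [← h2, ← Int.cast_smul_eq_zsmul K, Int.cast_pow, Int.cast_neg, Int.cast_one]
  congr 1

private lemma br_comp_perm (hsk : SkewOn br) (y : Fin (m + 2 + 1) → g)
    (τ : Equiv.Perm (Fin (m + 2 + 1))) (hτ : τ 0 = 0) :
    br (fun j => y (τ j.succ)) = ((Equiv.Perm.sign τ : ℤ)) • br (fun j => y j.succ) := by
  have hpe : Equiv.Perm.decomposeFin.symm (Equiv.Perm.decomposeFin τ) = τ :=
    Equiv.symm_apply_apply _ τ
  set p := (Equiv.Perm.decomposeFin τ).1 with hp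
  set e := (Equiv.Perm.decomposeFin τ).2 with he
  have hdec : Equiv.Perm.decomposeFin τ = (p, e) := rfl
  have hp0 : p = 0 := by
    rw [← hτ, ← hpe, hdec, Equiv.Perm.decomposeFin_symm_apply_zero]
  have happ : ∀ j : Fin (m + 2), τ j.succ = (e j).succ := by
    intro j
    rw [← hpe, hdec, Equiv.Perm.decomposeFin_symm_apply_succ, hp0]
    simp
  have hsign : Equiv.Perm.sign τ = Equiv.Perm.sign e := by
    rw [← hpe, hdec, Equiv.Perm.decomposeFin.symm_sign, hp0, if_pos rfl, one_mul]
  have htuple : (fun j : Fin (m + 2) => y (τ j.succ)) = (fun j : Fin (m + 2) => y j.succ) ∘ ⇑e := by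
    funext j
    simp [happ j, Function.comp]
  rw [htuple, hsk _ e, hsign]

private lemma fBr_skew (hsk : SkewOn br) : SkewOn (fBr K br f) := by
  intro x σ
  rw [fBr_apply, fBr_apply, ← Int.cast_smul_eq_zsmul K, Finset.smul_sum,
    ← Equiv.sum_comp σ (fun i => ((Equiv.Perm.sign σ : ℤ) : K) •
      (((-1 : K) ^ (i : ℕ) * f (x i)) • br (fun j => x (i.succAbove j))))]
  refine Finset.sum_congr rfl fun i _ => ?_
  set τ : Equiv.Perm (Fin (m + 1 + 2)) := ((σ i).cycleRange) * σ * (i.cycleRange)⁻¹ with hτdef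
  have hτ0 : τ 0 = 0 := by
    simp [hτdef, Equiv.Perm.mul_apply, Equiv.Perm.inv_def, Fin.cycleRange_symm_zero,
      Fin.cycleRange_self]
  have hy : ∀ l, x ((σ i).cycleRange.symm (τ l)) = x (σ (i.cycleRange.symm l)) := by
    intro l
    simp [hτdef, Equiv.Perm.mul_apply, Equiv.Perm.inv_def]
  have h1 : br (fun j : Fin (m + 1 + 1) => x (σ (i.succAbove j)))
      = ((Equiv.Perm.sign τ : ℤ)) • br (fun j => x ((σ i).succAbove j)) := by
    have := br_comp_perm hsk (fun l => x ((σ i).cycleRange.symm l)) τ hτ0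
    simp only [hy, Fin.cycleRange_symm_succ] at this
    exact this
  have hsign : ((Equiv.Perm.sign τ : ℤ)) =
      (-1 : ℤ) ^ ((σ i : Fin (m + 1 + 2)) : ℕ) * (Equiv.Perm.sign σ : ℤ) * (-1 : ℤ) ^ (i : ℕ) := by
    have hinv : ((-1 : ℤˣ) ^ (i : ℕ))⁻¹ = (-1 : ℤˣ) ^ (i : ℕ) := by
      rw [← inv_pow]
      norm_num
    rw [hτdef]
    simp only [map_mul, map_inv, Fin.sign_cycleRange, hinv]
    push_cast
    ring
  have hcomp : (x ∘ ⇑σ) i = x (σ i) := rfl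
  have hcomp2 : (fun j : Fin (m + 1 + 1) => (x ∘ ⇑σ) (i.succAbove j))
      = fun j => x (σ (i.succAbove j)) := rfl
  rw [hcomp2, h1, hsign, hcomp]
  rw [← Int.cast_smul_eq_zsmul K, smul_smul, smul_smul]
  congr 1
  push_cast
  ring_nf
  rw [pow_mul']
  norm_num
private lemma fBr_multilinear (hml : MultiLinearOn K br) : MultiLinearOn K (fBr K br f) := by
  constructor
  · intro x i a b
    rw [fBr_apply, fBr_apply, fBr_apply, ← Finset.sum_add_distrib]
    refine Finset.sum_congr rfl fun l _ => ?_
    rcases eq_or_ne l i with rfl | hne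
    · rw [Function.update_self, Function.update_self, Function.update_self, map_add]
      have ht : ∀ v : g, (fun j => Function.update x l v (l.succAbove j))
          = fun j => x (l.succAbove j) := by
        intro v; funext j; rw [Function.update_of_ne (Fin.succAbove_ne l j)]
      rw [ht, ht, ht, mul_add, add_smul]
    · obtain ⟨j, hj⟩ := Fin.exists_succAbove_eq (Ne.symm hne)
      have ht : ∀ v : g, (fun j' => Function.update x i v (l.succAbove j')) =
          Function.update (fun j' => x (l.succAbove j')) j v := by
        intro v
        funext j'
        rw [← hj]
        exact congrFun (Function.update_comp_eq_of_injective x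
          Fin.succAbove_right_injective j v) j'
      rw [Function.update_of_ne hne, Function.update_of_ne hne, Function.update_of_ne hne,
        ht, ht, ht, hml.1, smul_add]
  · intro x i c a
    rw [fBr_apply, fBr_apply, Finset.smul_sum]
    refine Finset.sum_congr rfl fun l _ => ?_
    rcases eq_or_ne l i with rfl | hne
    · rw [Function.update_self, Function.update_self, map_smul, smul_eq_mul]
      have ht : ∀ v : g, (fun j => Function.update x l v (l.succAbove j))
          = fun j => x (l.succAbove j) := by
        intro v; funext j; rw [Function.update_of_ne (Fin.succAbove_ne l j)]
      rw [ht, ht, smul_smul]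
      congr 1
      ring
    · obtain ⟨j, hj⟩ := Fin.exists_succAbove_eq (Ne.symm hne)
      have ht : ∀ v : g, (fun j' => Function.update x i v (l.succAbove j')) =
          Function.update (fun j' => x (l.succAbove j')) j v := by
        intro v
        funext j'
        rw [← hj]
        exact congrFun (Function.update_comp_eq_of_injective x
          Fin.succAbove_right_injective j v) j'
      rw [Function.update_of_ne hne, Function.update_of_ne hne, ht, ht, hml.2,
        smul_smul, smul_smul]
      congr 1
      ring

private lemma snoc_comp_succAbove {k : ℕ} (x : Fin (k + 1) → g) (w : g) (a : Fin (k + 1)) :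
    (fun j : Fin (k + 1) => (Fin.snoc x w : Fin (k + 2) → g) ((a.castSucc).succAbove j))
      = Fin.snoc (fun j => x (a.succAbove j)) w := by
  funext j
  refine Fin.lastCases ?_ (fun j' => ?_) j
  · rw [Fin.succAbove_ne_last_last (Fin.castSucc_lt_last a).ne, Fin.snoc_last, Fin.snoc_last]
  · rw [Fin.castSucc_succAbove_castSucc, Fin.snoc_castSucc, Fin.snoc_castSucc]

private lemma snoc_comp_succAbove_last {k : ℕ} (x : Fin (k + 1) → g) (w : g) :
    (fun j : Fin (k + 1) => (Fin.snoc x w : Fin (k + 2) → g) ((Fin.last (k + 1)).succAbove j))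
      = x := by
  funext j
  rw [Fin.succAbove_last, Fin.snoc_castSucc]

private lemma br_snoc_fBr (hml : MultiLinearOn K br) (u : Fin (m + 1) → g)
    (z : Fin (m + 1 + 2) → g) :
    br (Fin.snoc u (fBr K br f z)) =
      ∑ b : Fin (m + 1 + 2), ((-1 : K) ^ (b : ℕ) * f (z b)) •
        br (Fin.snoc u (br (fun j => z (b.succAbove j)))) := by
  have h0 : ∀ t : g, (Fin.snoc u t : Fin (m + 2) → g)
      = Function.update (Fin.snoc u (0 : g)) (Fin.last (m + 1)) t := by
    intro t
    rw [Fin.update_snoc_last]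
  rw [h0, fBr_apply, mlo_update_sum hml]
  refine Finset.sum_congr rfl fun b _ => ?_
  rw [hml.2, ← h0]

private lemma br_update_fBr (hml : MultiLinearOn K br) (u : Fin (m + 2) → g) (c : Fin (m + 2))
    (z : Fin (m + 1 + 2) → g) :
    br (Function.update u c (fBr K br f z)) =
      ∑ a : Fin (m + 1 + 2), ((-1 : K) ^ (a : ℕ) * f (z a)) •
        br (Function.update u c (br (fun j => z (a.succAbove j)))) := by
  rw [fBr_apply, mlo_update_sum hml]
  refine Finset.sum_congr rfl fun a _ => ?_
  rw [hml.2]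

private def pt {m : ℕ} (b : Fin (m + 1 + 2)) (c : Fin (m + 1 + 1)) : Fin (m + 1 + 1) :=
  if h : (c : ℕ) < (b : ℕ) then ⟨(b : ℕ) - 1, by have := b.isLt; omega⟩
  else ⟨(b : ℕ), by have := c.isLt; omega⟩

private lemma val_succAbove {n : ℕ} (p : Fin (n + 1)) (d : Fin n) :
    ((p.succAbove d : Fin (n + 1)) : ℕ)
      = if (d : ℕ) < (p : ℕ) then (d : ℕ) else (d : ℕ) + 1 := by
  rcases lt_or_ge ((d : ℕ)) ((p : ℕ)) with h | h
  · rw [if_pos h, Fin.succAbove_of_castSucc_lt]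
    · rfl
    · rw [Fin.lt_def]
      exact h
  · rw [if_neg (not_lt.mpr h), Fin.succAbove_of_le_castSucc]
    · rfl
    · rw [Fin.le_def]
      exact h

private lemma val_pt {m : ℕ} (b : Fin (m + 1 + 2)) (c : Fin (m + 1 + 1)) :
    ((pt b c : Fin (m + 1 + 1)) : ℕ)
      = if (c : ℕ) < (b : ℕ) then (b : ℕ) - 1 else (b : ℕ) := by
  unfold pt
  split_ifs <;> rfl

private lemma pt_succAbove {m : ℕ} (b : Fin (m + 1 + 2)) (c : Fin (m + 1 + 1)) :
    (b.succAbove c).succAbove (pt b c) = b := by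
  have hb := b.isLt
  have hc := c.isLt
  apply Fin.ext
  rw [val_succAbove, val_pt, val_succAbove]
  split_ifs <;> omega

private lemma pt_pt {m : ℕ} (b : Fin (m + 1 + 2)) (c : Fin (m + 1 + 1)) :
    pt (b.succAbove c) (pt b c) = c := by
  have hb := b.isLt
  have hc := c.isLt
  apply Fin.ext
  rw [val_pt, val_pt, val_succAbove]
  split_ifs <;> omega

private lemma pt_sign {m : ℕ} (b : Fin (m + 1 + 2)) (c : Fin (m + 1 + 1)) :
    (-1 : K) ^ ((b : ℕ) + (c : ℕ))
      = -(-1 : K) ^ (((b.succAbove c : Fin (m + 1 + 2)) : ℕ)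
          + ((pt b c : Fin (m + 1 + 1)) : ℕ)) := by
  rw [val_succAbove, val_pt]
  rcases lt_or_ge ((c : ℕ)) ((b : ℕ)) with h | h
  · rw [if_pos h, if_pos h]
    have he : (b : ℕ) + (c : ℕ) = ((c : ℕ) + ((b : ℕ) - 1)) + 1 := by omega
    rw [he, pow_succ]
    ring
  · rw [if_neg (not_lt.mpr h), if_neg (not_lt.mpr h)]
    have he : (c : ℕ) + 1 + (b : ℕ) = ((b : ℕ) + (c : ℕ)) + 1 := by omega
    rw [he, pow_succ]
    ring

private lemma succAbove_comp_range {n : ℕ} (p : Fin (n + 2)) (d : Fin (n + 1)) :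
    Set.range (p.succAbove ∘ d.succAbove) = ({p, p.succAbove d}ᶜ : Set (Fin (n + 2))) := by
  ext t
  simp only [Set.mem_range, Set.mem_compl_iff, Set.mem_insert_iff, Set.mem_singleton_iff,
    not_or, Function.comp_apply]
  constructor
  · rintro ⟨j, rfl⟩
    exact ⟨Fin.succAbove_ne p _,
      Fin.succAbove_right_injective.ne (Fin.succAbove_ne d j)⟩
  · rintro ⟨h1, h2⟩
    obtain ⟨s, hs⟩ := Fin.exists_succAbove_eq h1
    have hsd : s ≠ d := by
      intro e
      apply h2
      rw [← hs, e]
    obtain ⟨j, hj⟩ := Fin.exists_succAbove_eq hsd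
    exact ⟨j, by rw [hj, hs]⟩

private lemma succAbove_comp_eq {m : ℕ} (b : Fin (m + 1 + 2)) (c : Fin (m + 1 + 1)) :
    (b.succAbove ∘ c.succAbove : Fin (m + 1) → Fin (m + 1 + 2))
      = (b.succAbove c).succAbove ∘ (pt b c).succAbove := by
  have h1 : StrictMono (b.succAbove ∘ c.succAbove : Fin (m + 1) → Fin (m + 1 + 2)) :=
    (Fin.strictMono_succAbove b).comp (Fin.strictMono_succAbove c)
  have h2 : StrictMono ((b.succAbove c).succAbove ∘ (pt b c).succAbove :
      Fin (m + 1) → Fin (m + 1 + 2)) :=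
    (Fin.strictMono_succAbove _).comp (Fin.strictMono_succAbove _)
  have i1 : WellFoundedLT (Fin (m + 1)) := inferInstance
  refine (@StrictMono.range_inj (Fin (m + 1)) (Fin (m + 1 + 2)) _ _ i1 _ _ h1 h2).mp ?_
  rw [succAbove_comp_range, succAbove_comp_range, pt_succAbove, Set.pair_comm]

private lemma s_sum_zero (hsk : SkewOn br) (f : g →ₗ[K] K) (y : Fin (m + 1 + 2) → g) (q : g) :
    ∑ b : Fin (m + 1 + 2), ∑ c : Fin (m + 1 + 1),
      ((-1 : K) ^ ((b : ℕ) + (c : ℕ)) * (f (y b) * f (y (b.succAbove c)))) •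
        br (Fin.cons q (fun j => y (b.succAbove (c.succAbove j)))) = 0 := by
  classical
  rw [← Finset.sum_product']
  refine Finset.sum_ninvolution (fun p => (p.1.succAbove p.2, pt p.1 p.2)) ?_ ?_ ?_ ?_
  · rintro ⟨b, c⟩
    have htup : (fun j => y ((b.succAbove c).succAbove ((pt b c).succAbove j)))
        = fun j => y (b.succAbove (c.succAbove j)) := by
      funext j
      exact congrArg y (congrFun (succAbove_comp_eq b c).symm j)
    have hsgn : (-1 : K) ^ (((b.succAbove c : Fin (m + 1 + 2)) : ℕ)
          + ((pt b c : Fin (m + 1 + 1)) : ℕ))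
        = -(-1 : K) ^ ((b : ℕ) + (c : ℕ)) := by
      rw [pt_sign b c]
      ring
    simp only [htup, pt_succAbove b c, hsgn]
    rw [← add_smul]
    convert zero_smul K _ using 2
    ring
  · rintro ⟨b, c⟩ _ hne
    exact (Fin.succAbove_ne b c) (congrArg Prod.fst hne)
  · rintro ⟨b, c⟩
    simp
  · rintro ⟨b, c⟩
    have e1 := pt_succAbove b c
    have e2 := pt_pt b c
    simp only [e1, e2]
private lemma fBr_filippov (hml : MultiLinearOn K br) (hsk : SkewOn br) (hFil : Filippov br)
    (hf : ∀ u : Fin (m + 2) → g, f (br u) = 0) : Filippov (fBr K br f) := by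
  intro x y
  have hL : fBr K br f (Fin.snoc x (fBr K br f y)) =
      ∑ a : Fin (m + 2), ∑ b : Fin (m + 1 + 2), ∑ c : Fin (m + 1 + 1),
        (((-1 : K) ^ (a : ℕ) * f (x a)) * ((-1 : K) ^ (b : ℕ) * f (y b))) •
          br (Function.update (fun j => y (b.succAbove j)) c
            (br (Fin.snoc (fun j => x (a.succAbove j)) (y (b.succAbove c))))) := by
    rw [fBr_apply, Fin.sum_univ_castSucc]
    have hlast : ((-1 : K) ^ ((Fin.last (m + 1 + 1) : Fin (m + 1 + 2)) : ℕ) *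
        f ((Fin.snoc x (fBr K br f y) : Fin (m + 1 + 2) → g) (Fin.last (m + 1 + 1)))) •
        br (fun j => (Fin.snoc x (fBr K br f y) : Fin (m + 1 + 2) → g)
          ((Fin.last (m + 1 + 1)).succAbove j)) = 0 := by
      rw [Fin.snoc_last, f_fBr hf, mul_zero, zero_smul]
    rw [hlast, add_zero]
    refine Finset.sum_congr rfl fun a _ => ?_
    rw [Fin.snoc_castSucc, snoc_comp_succAbove, br_snoc_fBr hml, Finset.smul_sum]
    refine Finset.sum_congr rfl fun b _ => ?_
    rw [hFil (fun j => x (a.succAbove j)) (fun j => y (b.succAbove j)), Finset.smul_sum,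
      Finset.smul_sum]
    refine Finset.sum_congr rfl fun c _ => ?_
    rw [smul_smul, Fin.coe_castSucc]
  have hR : (∑ i : Fin (m + 1 + 2),
        fBr K br f (Function.update y i (fBr K br f (Fin.snoc x (y i)))))
      = ∑ b : Fin (m + 1 + 2), ∑ c : Fin (m + 1 + 1),
          ((-1 : K) ^ (b : ℕ) * f (y b)) •
            br (Function.update (fun j => y (b.succAbove j)) c
              (fBr K br f (Fin.snoc x (y (b.succAbove c))))) := by
    rw [Finset.sum_congr rfl (fun i (_ : i ∈ Finset.univ) =>
      fBr_apply br f (Function.update y i (fBr K br f (Fin.snoc x (y i)))))]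
    rw [Finset.sum_comm]
    refine Finset.sum_congr rfl fun b _ => ?_
    rw [Fin.sum_univ_succAbove (fun i =>
      ((-1 : K) ^ (b : ℕ) * f (Function.update y i (fBr K br f (Fin.snoc x (y i))) b)) •
        br (fun j => Function.update y i (fBr K br f (Fin.snoc x (y i))) (b.succAbove j))) b]
    have hzero : ((-1 : K) ^ (b : ℕ) *
        f (Function.update y b (fBr K br f (Fin.snoc x (y b))) b)) •
        br (fun j => Function.update y b (fBr K br f (Fin.snoc x (y b))) (b.succAbove j)) = 0 := by
      rw [Function.update_self, f_fBr hf, mul_zero, zero_smul]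
    rw [hzero, zero_add]
    refine Finset.sum_congr rfl fun c _ => ?_
    have hne : b ≠ b.succAbove c := (Fin.succAbove_ne b c).symm
    rw [Function.update_of_ne hne]
    congr 1
    refine congrArg br ?_
    have hcomp := Function.update_comp_eq_of_injective y
      (Fin.succAbove_right_injective (p := b)) c
      (fBr K br f (Fin.snoc x (y (b.succAbove c))))
    funext j
    exact congrFun hcomp j
  rw [hL, hR]
  have hcons : ∀ (b : Fin (m + 1 + 2)) (c : Fin (m + 1 + 1)),
      br (Function.update (fun j => y (b.succAbove j)) c (br x))
        = ((-1 : K) ^ (c : ℕ)) •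
          br (Fin.cons (br x) (fun j => y (b.succAbove (c.succAbove j)))) := by
    intro b c
    rw [skew_cancel (K := K) hsk (Function.update (fun j => y (b.succAbove j)) c (br x)) c]
    congr 1
    refine congrArg br ?_
    funext l
    refine Fin.cases ?_ (fun j => ?_) l
    · rw [Fin.cycleRange_symm_zero, Function.update_self, Fin.cons_zero]
    · rw [Fin.cycleRange_symm_succ, Function.update_of_ne (Fin.succAbove_ne c j), Fin.cons_succ]
  have hstep : ∀ (b : Fin (m + 1 + 2)) (c : Fin (m + 1 + 1)),
      ((-1 : K) ^ (b : ℕ) * f (y b)) • br (Function.update (fun j => y (b.succAbove j)) c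
          (fBr K br f (Fin.snoc x (y (b.succAbove c)))))
      = (∑ a : Fin (m + 2), (((-1 : K) ^ (a : ℕ) * f (x a)) * ((-1 : K) ^ (b : ℕ) * f (y b))) •
            br (Function.update (fun j => y (b.succAbove j)) c
              (br (Fin.snoc (fun j => x (a.succAbove j)) (y (b.succAbove c))))))
        + ((-1 : K) ^ (m + 2)) • (((-1 : K) ^ ((b : ℕ) + (c : ℕ)) *
            (f (y b) * f (y (b.succAbove c)))) •
            br (Fin.cons (br x) (fun j => y (b.succAbove (c.succAbove j))))) := by
    intro b c
    rw [br_update_fBr hml, Finset.smul_sum, Fin.sum_univ_castSucc]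
    congr 1
    · refine Finset.sum_congr rfl fun a _ => ?_
      rw [Fin.snoc_castSucc, snoc_comp_succAbove, smul_smul, Fin.coe_castSucc]
      congr 1
      ring
    · rw [Fin.snoc_last, snoc_comp_succAbove_last, hcons b c, Fin.val_last]
      rw [smul_smul, smul_smul, smul_smul]
      congr 1
      rw [pow_add]
      ring
  have h2 : (∑ b : Fin (m + 1 + 2), ∑ c : Fin (m + 1 + 1),
        ((-1 : K) ^ (b : ℕ) * f (y b)) •
          br (Function.update (fun j => y (b.succAbove j)) c
            (fBr K br f (Fin.snoc x (y (b.succAbove c))))))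
      = (∑ b : Fin (m + 1 + 2), ∑ c : Fin (m + 1 + 1), ∑ a : Fin (m + 2),
          (((-1 : K) ^ (a : ℕ) * f (x a)) * ((-1 : K) ^ (b : ℕ) * f (y b))) •
            br (Function.update (fun j => y (b.succAbove j)) c
              (br (Fin.snoc (fun j => x (a.succAbove j)) (y (b.succAbove c))))))
        + ((-1 : K) ^ (m + 2)) • (∑ b : Fin (m + 1 + 2), ∑ c : Fin (m + 1 + 1),
            ((-1 : K) ^ ((b : ℕ) + (c : ℕ)) * (f (y b) * f (y (b.succAbove c)))) •
              br (Fin.cons (br x) (fun j => y (b.succAbove (c.succAbove j))))) := by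
    rw [Finset.smul_sum, ← Finset.sum_add_distrib]
    refine Finset.sum_congr rfl fun b _ => ?_
    rw [Finset.smul_sum, ← Finset.sum_add_distrib]
    refine Finset.sum_congr rfl fun c _ => ?_
    exact hstep b c
  rw [h2, s_sum_zero hsk f y (br x), smul_zero, add_zero]
  conv_lhs => rw [Finset.sum_comm]
  exact Finset.sum_congr rfl fun b _ => Finset.sum_comm

end FConstructionHelpers

/-- Let `(g, br)` be an `n`-Lie algebra (`n = m+2`) and `f ∈ g*` a linear
functional with `f([x₁,...,xₙ]_g) = 0` for all `xᵢ`.  Then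
`{x₁,...,x_{n+1}} := Σᵢ (-1)^{i-1} f(xᵢ)[x₁,...,x̂ᵢ,...,x_{n+1}]_g` defines an
`(n+1)`-Lie algebra structure on `g`. -/
theorem f_construction_is_n_plus_one_lie {K : Type*} [Field K] {g : Type*}
    [AddCommGroup g] [Module K g] {m : ℕ} (br : (Fin (m + 2) → g) → g)
    (hg : IsNLie K br) (f : g →ₗ[K] K) (hf : ∀ y : Fin (m + 2) → g, f (br y) = 0) :
    IsNLie K (fBr K br f) := by
  obtain ⟨hml, hsk, hFil⟩ := hg
  exact ⟨fBr_multilinear hml, fBr_skew hsk, fBr_filippov hml hsk hFil hf⟩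
end
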